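/- arXiv:1705.02379 — 8 statements merged into one kernel-verified Lean document; each statement's English description precedes it below -/
import Mathlib

section
/- If G is a finite bowtie-free graph (a graph containing no bowtie, i.e. no two triangles sharing exactly one vertex, as a subgraph), then G is an induced subgraph of some finite good bowtie-free graph G', where a bowtie-free graph is called good if every vertex is contained in a copy of a chimney Ch_n (the free amalgamation of n ≥ 2 triangles over one common edge) or in a copy of the complete graph K_4. -/
/-- The bowtie graph: two triangles {0,1,2} and {2,3,4} sharing exactly the vertex 2. -/
def bowtie : SimpleGraph (Fin 5) :=
  SimpleGraph.fromRel (fun a b =>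
    ((a : ℕ), (b : ℕ)) ∈ ({(0,1),(0,2),(1,2),(2,3),(2,4),(3,4)} : Set (ℕ × ℕ)))

/-- A graph is bowtie-free if there is no monomorphism from the bowtie into it. -/
def BowtieFree {V : Type} (G : SimpleGraph V) : Prop :=
  ¬∃ f : Fin 5 → V, Function.Injective f ∧ ∀ a b, bowtie.Adj a b → G.Adj (f a) (f b)

/-- The chimney `Ch_n`: two base vertices (the left summand) joined to each other and to
`n` apex vertices (the right summand); apexes are pairwise non-adjacent. -/
def chimney (n : ℕ) : SimpleGraph (Fin 2 ⊕ Fin n) :=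
  SimpleGraph.fromRel (fun a b => a.isLeft ∨ b.isLeft)

/-- `v` lies in an induced copy of some chimney `Ch_n` with `n ≥ 2`. -/
def InChimneyCopy {W : Type} (G : SimpleGraph W) (v : W) : Prop :=
  ∃ n, 2 ≤ n ∧ ∃ f : (Fin 2 ⊕ Fin n) → W, Function.Injective f ∧
    (∀ a b, (chimney n).Adj a b ↔ G.Adj (f a) (f b)) ∧ v ∈ Set.range f

/-- `v` lies in a copy of the complete graph `K₄`. -/
def InK4Copy {W : Type} (G : SimpleGraph W) (v : W) : Prop :=
  ∃ f : Fin 4 → W, Function.Injective f ∧ (∀ i j, i ≠ j → G.Adj (f i) (f j)) ∧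
    v ∈ Set.range f

/-- A bowtie-free graph is good if every vertex lies in a chimney or in a `K₄`. -/
def Good {W : Type} (G : SimpleGraph W) : Prop :=
  ∀ v, InChimneyCopy G v ∨ InK4Copy G v

/-!
Complete to a `K₄` every *lonely clique*: a vertex on no triangle, or a triangle whose vertices
lie on no other triangle. In a bowtie-free graph these cliques are pairwise disjoint and every
triangle meeting one of them lies inside it, so each glued `K₄` is a four-vertex block containing
every triangle through it; a bowtie needs five vertices, so none appears. A vertex outside all
lonely cliques lies on a triangle with an edge that has two common neighbours. The common
neighbourhood of that edge is either independent, which gives an induced chimney, or it contains an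
edge, and then bowtie-freeness forces it to be exactly that edge, which gives a `K₄`.
-/

open Finset SimpleGraph

variable {V W : Type} {G : SimpleGraph V}

theorem bowtieFree_iff :
    BowtieFree G ↔ ∀ ⦃a b c d e⦄, G.Adj a b → G.Adj a c → G.Adj b c → G.Adj c d → G.Adj c e →
      G.Adj d e → a = d ∨ a = e ∨ b = d ∨ b = e := by
  constructor
  · intro hG a b c d e hab hac hbc hcd hce hde
    by_contra! hne
    refine hG ⟨![a, b, c, d, e], ?_, ?_⟩
    · have := hab.ne; have := hac.ne; have := hbc.ne; have := hcd.ne; have := hce.ne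
      have := hde.ne
      intro i j hij
      fin_cases i <;> fin_cases j <;> simp_all [eq_comm]
    · intro i j hij
      fin_cases i <;> fin_cases j <;> simp_all [bowtie, G.adj_comm]
  · rintro hG ⟨f, hf, hadj⟩
    have h : ∀ i j : Fin 5,
        (i.val, j.val) ∈ ({(0,1),(0,2),(1,2),(2,3),(2,4),(3,4)} : Set (ℕ × ℕ)) →
        G.Adj (f i) (f j) := fun i j hij => hadj i j (by simp_all [bowtie]; omega)
    rcases hG (h 0 1 (by simp)) (h 0 2 (by simp)) (h 1 2 (by simp)) (h 2 3 (by simp))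
      (h 2 4 (by simp)) (h 3 4 (by simp)) with e | e | e | e <;> simpa using hf e

theorem BowtieFree.triangles_share_edge (hG : BowtieFree G) {a b c d e : V} (hab : G.Adj a b)
    (hac : G.Adj a c) (hbc : G.Adj b c) (hcd : G.Adj c d) (hce : G.Adj c e) (hde : G.Adj d e) :
    a = d ∨ a = e ∨ b = d ∨ b = e :=
  bowtieFree_iff.1 hG hab hac hbc hcd hce hde

theorem inK4Copy_of_isNClique {s : Finset V} (hs : G.IsNClique 4 s) {v : V} (hv : v ∈ s) :
    InK4Copy G v := by
  let e := (Finset.equivFinOfCardEq hs.card_eq).symm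
  refine ⟨fun i => e i, Subtype.val_injective.comp e.injective, fun i j hij => ?_,
    e.symm ⟨v, hv⟩, by simp⟩
  exact hs.isClique (e i).2 (e j).2 (by simpa [Subtype.ext_iff] using e.injective.ne hij)

theorem InK4Copy.map {H : SimpleGraph W} (f : G ↪g H) {v : V} (hv : InK4Copy G v) :
    InK4Copy H (f v) := by
  obtain ⟨g, hg, hadj, i, rfl⟩ := hv
  exact ⟨f ∘ g, f.injective.comp hg, fun i j hij => f.map_adj_iff.2 (hadj i j hij), i, rfl⟩

theorem InChimneyCopy.map {H : SimpleGraph W} (f : G ↪g H) {v : V} (hv : InChimneyCopy G v) :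
    InChimneyCopy H (f v) := by
  obtain ⟨n, hn, g, hg, hadj, i, rfl⟩ := hv
  exact ⟨n, hn, f ∘ g, f.injective.comp hg, fun a b => (hadj a b).trans f.map_adj_iff.symm,
    i, rfl⟩

theorem inChimneyCopy_of_isolated_apexes {p q : V} (hpq : G.Adj p q) {A : Finset V}
    (hA : 2 ≤ #A) (hpA : ∀ a ∈ A, G.Adj p a) (hqA : ∀ a ∈ A, G.Adj q a)
    (hAA : ∀ a ∈ A, ∀ b ∈ A, ¬G.Adj a b) {v : V} (hv : v = p ∨ v = q ∨ v ∈ A) :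
    InChimneyCopy G v := by
  let e := A.equivFin.symm
  have hpe : ∀ j, p ≠ e j := fun j h => G.irrefl (h ▸ hpA _ (e j).2)
  have hqe : ∀ j, q ≠ e j := fun j h => G.irrefl (h ▸ hqA _ (e j).2)
  refine ⟨#A, hA, Sum.elim ![p, q] (fun j => e j), ?_, ?_, ?_⟩
  · rintro (i | i) (j | j) hij
    · fin_cases i <;> fin_cases j <;> simp_all [hpq.ne, hpq.ne']
    · fin_cases i <;> simp_all
    · fin_cases j <;> simp_all [eq_comm]
    · simpa using e.injective (Subtype.ext hij)
  · rintro (i | i) (j | j)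
    · fin_cases i <;> fin_cases j <;> simp [chimney, hpq, hpq.symm]
    · fin_cases i <;> simp [chimney, hpA, hqA]
    · fin_cases j <;> simp [chimney, G.adj_comm _ p, G.adj_comm _ q, hpA, hqA]
    · simp [chimney, hAA]
  · rcases hv with rfl | rfl | hv
    exacts [⟨.inl 0, rfl⟩, ⟨.inl 1, rfl⟩, ⟨.inr (e.symm ⟨v, hv⟩), by simp⟩]

/-- Every triangle meeting `s` lies in `s`; as `a b c` runs over all orderings of a triangle,
asking for `b ∈ s` suffices. -/
def IsTriangleClosed (G : SimpleGraph V) (s : Set V) : Prop :=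
  ∀ ⦃a b c⦄, G.Adj a b → G.Adj a c → G.Adj b c → a ∈ s → b ∈ s

theorem BowtieFree.inK4Copy_or_inChimneyCopy_of_two_common [Fintype V] (hG : BowtieFree G)
    {p q r s : V} (hpq : G.Adj p q) (hpr : G.Adj p r) (hqr : G.Adj q r) (hps : G.Adj p s)
    (hqs : G.Adj q s) (hrs : r ≠ s) {v : V} (hv : v = p ∨ v = q ∨ G.Adj p v ∧ G.Adj q v) :
    InK4Copy G v ∨ InChimneyCopy G v := by
  classical
  let A := univ.filter fun w => G.Adj p w ∧ G.Adj q w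
  have hA : ∀ w, w ∈ A ↔ G.Adj p w ∧ G.Adj q w := by simp [A]
  by_cases hedge : ∃ a ∈ A, ∃ b ∈ A, G.Adj a b
  · obtain ⟨a, ha, b, hb, hab⟩ := hedge
    rw [hA] at ha hb
    have hK : G.IsNClique 4 {p, q, a, b} := by
      rw [isNClique_iff]
      refine ⟨?_, ?_⟩
      · simp [isClique_insert, hpq, ha.1, ha.2, hb.1, hb.2, hab]
      · simp [card_insert_of_notMem, hpq.ne, ha.1.ne, ha.2.ne, hb.1.ne, hb.2.ne, hab.ne]
    refine Or.inl (inK4Copy_of_isNClique hK ?_)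
    rcases hv with rfl | rfl | ⟨hpv, hqv⟩
    · simp
    · simp
    · -- the triangles `abp` and `pqv` meet in `p`
      rcases hG.triangles_share_edge hab ha.1.symm hb.1.symm hpq hpv hqv with h | h | h | h
      · exact absurd h ha.2.ne'
      · simp [h]
      · exact absurd h hb.2.ne'
      · simp [h]
  · push Not at hedge
    refine Or.inr (inChimneyCopy_of_isolated_apexes hpq ?_ (fun a ha => ((hA a).1 ha).1)
      (fun a ha => ((hA a).1 ha).2) hedge ?_)
    · exact one_lt_card.2 ⟨r, (hA r).2 ⟨hpr, hqr⟩, s, (hA s).2 ⟨hps, hqs⟩, hrs⟩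
    · rcases hv with rfl | rfl | hv
      exacts [Or.inl rfl, Or.inr (Or.inl rfl), Or.inr (Or.inr ((hA v).2 hv))]

theorem BowtieFree.eq_or_eq_of_unique_common (hG : BowtieFree G) {u x y b c : V}
    (hux : G.Adj u x) (huy : G.Adj u y) (hxy : G.Adj x y)
    (hx : ∀ w, G.Adj u w → G.Adj x w → w = y) (hy : ∀ w, G.Adj u w → G.Adj y w → w = x)
    (hub : G.Adj u b) (huc : G.Adj u c) (hbc : G.Adj b c) : b = x ∨ b = y := by
  rcases hG.triangles_share_edge hbc hub.symm huc.symm hux huy hxy with h | h | rfl | rfl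
  · exact Or.inl h
  · exact Or.inr h
  · exact Or.inr (hx b hub hbc.symm)
  · exact Or.inl (hy b hub hbc.symm)

theorem BowtieFree.isTriangleClosed_of_unique_common (hG : BowtieFree G) {u x y : V}
    (hux : G.Adj u x) (huy : G.Adj u y) (hxy : G.Adj x y)
    (hx : ∀ w, G.Adj u w → G.Adj x w → w = y) (hy : ∀ w, G.Adj u w → G.Adj y w → w = x)
    (hu : ∀ w, G.Adj x w → G.Adj y w → w = u) : IsTriangleClosed G {u, x, y} := by
  intro a b c hab hac hbc ha
  simp only [Set.mem_insert_iff, Set.mem_singleton_iff] at ha ⊢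
  rcases ha with rfl | rfl | rfl
  · rcases hG.eq_or_eq_of_unique_common hux huy hxy hx hy hab hac hbc with h | h <;> simp [h]
  · rcases hG.eq_or_eq_of_unique_common hux.symm hxy huy (fun w h₁ h₂ => hx w h₂ h₁) hu
      hab hac hbc with h | h <;> simp [h]
  · rcases hG.eq_or_eq_of_unique_common huy.symm hxy.symm hux (fun w h₁ h₂ => hy w h₂ h₁)
      (fun w h₁ h₂ => hu w h₂ h₁) hab hac hbc with h | h <;> simp [h]

def IsLonelyClique (G : SimpleGraph V) (s : Finset V) : Prop :=
  (G.IsNClique 1 s ∨ G.IsNClique 3 s) ∧ IsTriangleClosed G s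

theorem IsLonelyClique.isClique {s : Finset V} (hs : IsLonelyClique G s) : G.IsClique s :=
  hs.1.elim (·.isClique) (·.isClique)

theorem IsLonelyClique.card_le_four {s : Finset V} (hs : IsLonelyClique G s) : #s ≤ 4 := by
  rcases hs.1 with h | h <;> simp [h.card_eq]

theorem IsLonelyClique.subset_of_mem {s t : Finset V} (hs : IsLonelyClique G s)
    (ht : IsTriangleClosed G t) {u : V} (hus : u ∈ s) (hut : u ∈ t) : s ⊆ t := by
  classical
  rcases hs.1 with h1 | h3
  · obtain ⟨a, rfl⟩ := isNClique_one.1 h1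
    simpa [mem_singleton.1 hus] using hut
  · intro w hw
    obtain rfl | hwu := eq_or_ne w u
    · exact hut
    obtain ⟨z, hz, hzuw⟩ := exists_mem_notMem_of_card_lt_card
      (show #{u, w} < #s by rw [h3.card_eq]; exact (card_le_two).trans_lt (by norm_num))
    simp only [mem_insert, mem_singleton, not_or] at hzuw
    exact ht (h3.isClique hus hw hwu.symm) (h3.isClique hus hz (Ne.symm hzuw.1))
      (h3.isClique hw hz (Ne.symm hzuw.2)) hut

theorem pairwise_disjoint_lonelyCliques :
    Pairwise fun s t : {s // IsLonelyClique G s} => Disjoint s.1 t.1 := by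
  intro s t hst
  refine disjoint_left.2 fun u hus hut => hst (Subtype.ext ?_)
  exact subset_antisymm (s.2.subset_of_mem t.2.2 hus hut) (t.2.subset_of_mem s.2.2 hut hus)

theorem BowtieFree.inK4Copy_or_inChimneyCopy [Fintype V] (hG : BowtieFree G) {u : V}
    (hu : ∀ s, IsLonelyClique G s → u ∉ s) : InK4Copy G u ∨ InChimneyCopy G u := by
  classical
  obtain ⟨x, y, hux, huy, hxy⟩ : ∃ x y, G.Adj u x ∧ G.Adj u y ∧ G.Adj x y := by
    by_contra! h
    refine hu {u} ⟨Or.inl (isNClique_one.2 ⟨u, rfl⟩), ?_⟩ (mem_singleton_self u)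
    intro a b c hab hac hbc ha
    rw [coe_singleton, Set.mem_singleton_iff] at ha
    exact absurd hbc (h b c (ha ▸ hab) (ha ▸ hac))
  by_cases hx : ∃ w, G.Adj u w ∧ G.Adj x w ∧ w ≠ y
  · obtain ⟨w, huw, hxw, hwy⟩ := hx
    exact hG.inK4Copy_or_inChimneyCopy_of_two_common hux huy hxy huw hxw hwy.symm (Or.inl rfl)
  by_cases hy : ∃ w, G.Adj u w ∧ G.Adj y w ∧ w ≠ x
  · obtain ⟨w, huw, hyw, hwx⟩ := hy
    exact hG.inK4Copy_or_inChimneyCopy_of_two_common huy hux hxy.symm huw hyw hwx.symm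
      (Or.inl rfl)
  by_cases hxy' : ∃ w, G.Adj x w ∧ G.Adj y w ∧ w ≠ u
  · obtain ⟨w, hxw, hyw, hwu⟩ := hxy'
    exact hG.inK4Copy_or_inChimneyCopy_of_two_common hxy hux.symm huy.symm hxw hyw hwu.symm
      (Or.inr (Or.inr ⟨hux.symm, huy.symm⟩))
  push Not at hx hy hxy'
  refine absurd (mem_insert_self u {x, y})
    (hu _ ⟨Or.inr (is3Clique_iff.2 ⟨u, x, y, hux, huy, hxy, rfl⟩), ?_⟩)
  simpa using hG.isTriangleClosed_of_unique_common hux huy hxy hx hy hxy'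

section Glue

variable {ι : Type}

/-- Over each `S i` there are `4 - #(S i)` new vertices; with `S i` they form a block made into
a `K₄`. -/
abbrev GlueK4Vert (S : ι → Finset V) : Type := V ⊕ Σ i, Fin (4 - #(S i))

def gluedBlock (S : ι → Finset V) (i : ι) : Finset (GlueK4Vert S) :=
  (S i).disjSum (univ.map (Function.Embedding.sigmaMk i))

def glueK4 (G : SimpleGraph V) (S : ι → Finset V) : SimpleGraph (GlueK4Vert S) :=
  G.map Function.Embedding.inl ⊔ fromRel fun z w => ∃ i, z ∈ gluedBlock S i ∧ w ∈ gluedBlock S i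

variable {S : ι → Finset V}

@[simp] theorem inl_mem_gluedBlock {u : V} {i : ι} : .inl u ∈ gluedBlock S i ↔ u ∈ S i := by
  simp [gluedBlock]

@[simp] theorem inr_mem_gluedBlock {p : Σ i, Fin (4 - #(S i))} {i : ι} :
    .inr p ∈ gluedBlock S i ↔ p.1 = i := by
  obtain ⟨j, x⟩ := p
  simp only [gluedBlock, inr_mem_disjSum, mem_map, mem_univ, true_and,
    Function.Embedding.sigmaMk_apply, Sigma.mk.inj_iff]
  exact ⟨fun ⟨_, h, _⟩ => h.symm, fun h => by subst h; exact ⟨x, rfl, .rfl⟩⟩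

theorem card_gluedBlock {i : ι} (hi : #(S i) ≤ 4) : #(gluedBlock S i) = 4 := by
  simp [gluedBlock, card_disjSum]
  omega

theorem triangles_share_edge_of_card_le_four {s : Finset V} (hs : #s ≤ 4) {a b c d e : V}
    (ha : a ∈ s) (hb : b ∈ s) (hc : c ∈ s) (hd : d ∈ s) (he : e ∈ s) (hab : G.Adj a b)
    (hac : G.Adj a c) (hbc : G.Adj b c) (hcd : G.Adj c d) (hce : G.Adj c e) (hde : G.Adj d e) :
    a = d ∨ a = e ∨ b = d ∨ b = e := by
  classical
  by_contra! hne
  have h5 : #{a, b, c, d, e} = 5 := by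
    simp [card_insert_of_notMem, hab.ne, hac.ne, hbc.ne, hcd.ne, hce.ne, hde.ne, hne]
  have := card_le_card (show {a, b, c, d, e} ⊆ s by simp [insert_subset_iff, *])
  omega

theorem eq_of_mem_gluedBlock (hS : Pairwise fun i j => Disjoint (S i) (S j)) {z : GlueK4Vert S}
    {i j : ι} (hi : z ∈ gluedBlock S i) (hj : z ∈ gluedBlock S j) : i = j := by
  rcases z with u | p
  · by_contra h
    exact disjoint_left.1 (hS h) (inl_mem_gluedBlock.1 hi) (inl_mem_gluedBlock.1 hj)
  · exact (inr_mem_gluedBlock.1 hi).symm.trans (inr_mem_gluedBlock.1 hj)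

theorem glueK4_adj {z w : GlueK4Vert S} :
    (glueK4 G S).Adj z w ↔
      (∃ u v, G.Adj u v ∧ .inl u = z ∧ .inl v = w) ∨
        z ≠ w ∧ ∃ i, z ∈ gluedBlock S i ∧ w ∈ gluedBlock S i := by
  simp only [glueK4, sup_adj, map_adj, fromRel_adj, Function.Embedding.inl_apply]
  rw [show (∃ i, w ∈ gluedBlock S i ∧ z ∈ gluedBlock S i) ↔ _ from
    exists_congr fun _ => and_comm, or_self]

theorem glueK4_adj_inl (hS : ∀ i, G.IsClique (S i)) {u v : V} :
    (glueK4 G S).Adj (.inl u) (.inl v) ↔ G.Adj u v := by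
  rw [glueK4_adj]
  constructor
  · rintro (⟨u', v', h, hu, hv⟩ | ⟨hne, i, hu, hv⟩)
    · rwa [← Sum.inl_injective hu, ← Sum.inl_injective hv]
    · exact hS i (inl_mem_gluedBlock.1 hu) (inl_mem_gluedBlock.1 hv) (by simpa using hne)
  · exact fun h => Or.inl ⟨u, v, h, rfl, rfl⟩

def glueK4Embedding (hS : ∀ i, G.IsClique (S i)) : G ↪g glueK4 G S :=
  ⟨.inl, glueK4_adj_inl hS⟩

theorem mem_gluedBlock_of_glueK4_adj_inr {p : Σ i, Fin (4 - #(S i))} {z : GlueK4Vert S}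
    (h : (glueK4 G S).Adj (.inr p) z) : z ∈ gluedBlock S p.1 := by
  rcases glueK4_adj.1 h with ⟨_, _, _, h, -⟩ | ⟨-, i, hp, hz⟩
  · exact absurd h Sum.inl_ne_inr
  · rwa [inr_mem_gluedBlock.1 hp]

theorem exists_adj_of_glueK4_adj_inl {u : V} (hu : ∀ i, u ∉ S i) {z : GlueK4Vert S}
    (h : (glueK4 G S).Adj (.inl u) z) : ∃ v, G.Adj u v ∧ .inl v = z := by
  rcases glueK4_adj.1 h with ⟨u', v, h, hu', hv⟩ | ⟨-, i, hu', -⟩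
  · exact ⟨v, Sum.inl_injective hu' ▸ h, hv⟩
  · exact absurd (inl_mem_gluedBlock.1 hu') (hu i)

theorem isNClique_gluedBlock {i : ι} (hi : #(S i) ≤ 4) :
    (glueK4 G S).IsNClique 4 (gluedBlock S i) :=
  ⟨fun _ hz _ hw hne => glueK4_adj.2 (Or.inr ⟨hne, i, hz, hw⟩), card_gluedBlock hi⟩

theorem isTriangleClosed_gluedBlock (hcl : ∀ i, G.IsClique (S i))
    (hS : ∀ i, IsTriangleClosed G (S i)) (hdisj : Pairwise fun i j => Disjoint (S i) (S j))
    (i : ι) : IsTriangleClosed (glueK4 G S) (gluedBlock S i) := by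
  intro a b c hab hac hbc ha
  rcases b with v | q
  swap
  · exact inr_mem_gluedBlock.2
      (eq_of_mem_gluedBlock hdisj (mem_gluedBlock_of_glueK4_adj_inr hab.symm) ha)
  rcases c with w | q
  swap
  · rw [eq_of_mem_gluedBlock hdisj ha (mem_gluedBlock_of_glueK4_adj_inr hac.symm)]
    exact mem_gluedBlock_of_glueK4_adj_inr hbc.symm
  rcases a with u | q
  swap
  · rw [← inr_mem_gluedBlock.1 ha]
    exact mem_gluedBlock_of_glueK4_adj_inr hab
  rw [glueK4_adj_inl hcl] at hab hac hbc
  exact inl_mem_gluedBlock.2 (hS i hab hac hbc (inl_mem_gluedBlock.1 ha))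

theorem bowtieFree_glueK4 (hG : BowtieFree G) (hcl : ∀ i, G.IsClique (S i))
    (hcard : ∀ i, #(S i) ≤ 4) (hS : ∀ i, IsTriangleClosed G (S i))
    (hdisj : Pairwise fun i j => Disjoint (S i) (S j)) : BowtieFree (glueK4 G S) := by
  rw [bowtieFree_iff]
  intro a b c d e hab hac hbc hcd hce hde
  by_cases hc : ∃ i, c ∈ gluedBlock S i
  · obtain ⟨i, hi⟩ := hc
    have hK := isTriangleClosed_gluedBlock hcl hS hdisj i
    exact triangles_share_edge_of_card_le_four (card_gluedBlock (hcard i)).le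
      (hK hac.symm hbc.symm hab hi) (hK hbc.symm hac.symm hab.symm hi) hi (hK hcd hce hde hi)
      (hK hce hcd hde.symm hi) hab hac hbc hcd hce hde
  push Not at hc
  rcases c with u | p
  swap
  · exact absurd (inr_mem_gluedBlock.2 rfl) (hc p.1)
  have hu : ∀ i, u ∉ S i := fun i h => hc i (inl_mem_gluedBlock.2 h)
  obtain ⟨a, -, rfl⟩ := exists_adj_of_glueK4_adj_inl hu hac.symm
  obtain ⟨b, -, rfl⟩ := exists_adj_of_glueK4_adj_inl hu hbc.symm
  obtain ⟨d, -, rfl⟩ := exists_adj_of_glueK4_adj_inl hu hcd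
  obtain ⟨e, -, rfl⟩ := exists_adj_of_glueK4_adj_inl hu hce
  simp only [glueK4_adj_inl hcl] at hab hac hbc hcd hce hde
  simpa using hG.triangles_share_edge hab hac hbc hcd hce hde

end Glue

theorem good_glueK4_lonelyCliques [Fintype V] (hG : BowtieFree G) :
    Good (glueK4 G fun s : {s // IsLonelyClique G s} => s.1) := by
  intro z
  by_cases hz : ∃ i, z ∈ gluedBlock _ i
  · obtain ⟨i, hi⟩ := hz
    exact Or.inr (inK4Copy_of_isNClique (isNClique_gluedBlock i.2.card_le_four) hi)
  push Not at hz
  rcases z with u | p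
  · have hu : ∀ s, IsLonelyClique G s → u ∉ s :=
      fun s hs h => hz ⟨s, hs⟩ (inl_mem_gluedBlock.2 h)
    let f := glueK4Embedding fun s : {s // IsLonelyClique G s} => s.2.isClique
    exact (hG.inK4Copy_or_inChimneyCopy hu).symm.imp (·.map f) (·.map f)
  · exact absurd (inr_mem_gluedBlock.2 rfl) (hz p.1)

/-- Every finite bowtie-free graph is an induced subgraph of a finite good bowtie-free graph. -/
theorem stmt0 {V : Type} [Fintype V] (G : SimpleGraph V) (hG : BowtieFree G) :
    ∃ (W : Type) (_ : Fintype W) (G' : SimpleGraph W) (f : V ↪ W),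
      BowtieFree G' ∧ Good G' ∧ ∀ a b, G.Adj a b ↔ G'.Adj (f a) (f b) := by
  let S : {s // IsLonelyClique G s} → Finset V := fun s => s.1
  have hcl : ∀ i, G.IsClique (S i) := fun i => i.2.isClique
  let f := glueK4Embedding hcl
  refine ⟨GlueK4Vert S, Fintype.ofFinite _, glueK4 G S, f.toEmbedding, ?_,
    good_glueK4_lonelyCliques hG, fun a b => f.map_adj_iff.symm⟩
  exact bowtieFree_glueK4 hG hcl (fun i => i.2.card_le_four) (fun i => i.2.2)
    pairwise_disjoint_lonelyCliques
end

section
/- In a bowtie-free graph G, if a triangle T = {v1,v2,v3} is not contained in any 2-chimney and not contained in any K_4, then adding a new vertex v4 adjacent exactly to v1 and v2 (creating the new triangle {v1,v2,v4}) yields a graph that is still bowtie-free. -/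
/-! A bowtie through the new vertex `w` cannot have `w` as its centre, since `w` has only two
neighbours; so one of its triangles is `{w, v1, v2}` and the other is a triangle of `G` through
`v1` (say) avoiding `v2`. If that triangle also avoids `v3`, it forms a bowtie with `{v1, v2, v3}`
in `G`. Otherwise its third vertex `z` is a common neighbour of `v1` and `v3` outside the
triangle, and `{v1, v2, v3, z}` spans a `K₄` or, with base `{v1, v3}`, an induced 2-chimney. -/

open Function Sum

structure IsBowtie {V : Type} (G : SimpleGraph V) (c a b x y : V) : Prop where
  adj_ca : G.Adj c a
  adj_cb : G.Adj c b
  adj_ab : G.Adj a b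
  adj_cx : G.Adj c x
  adj_cy : G.Adj c y
  adj_xy : G.Adj x y
  a_ne_x : a ≠ x
  a_ne_y : a ≠ y
  b_ne_x : b ≠ x
  b_ne_y : b ≠ y

namespace IsBowtie

variable {V : Type} {G : SimpleGraph V} {c a b x y : V}

theorem swap (h : IsBowtie G c a b x y) : IsBowtie G c b a x y :=
  ⟨h.adj_cb, h.adj_ca, h.adj_ab.symm, h.adj_cx, h.adj_cy, h.adj_xy,
    h.b_ne_x, h.b_ne_y, h.a_ne_x, h.a_ne_y⟩

theorem symm (h : IsBowtie G c a b x y) : IsBowtie G c x y a b :=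
  ⟨h.adj_cx, h.adj_cy, h.adj_xy, h.adj_ca, h.adj_cb, h.adj_ab,
    h.a_ne_x.symm, h.b_ne_x.symm, h.a_ne_y.symm, h.b_ne_y.symm⟩

theorem comap {W : Type} {H : SimpleGraph W} (e : G ↪g H)
    (h : IsBowtie H (e c) (e a) (e b) (e x) (e y)) : IsBowtie G c a b x y :=
  ⟨e.map_adj_iff.mp h.adj_ca, e.map_adj_iff.mp h.adj_cb, e.map_adj_iff.mp h.adj_ab,
    e.map_adj_iff.mp h.adj_cx, e.map_adj_iff.mp h.adj_cy, e.map_adj_iff.mp h.adj_xy,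
    fun h' => h.a_ne_x (congrArg e h'), fun h' => h.a_ne_y (congrArg e h'),
    fun h' => h.b_ne_x (congrArg e h'), fun h' => h.b_ne_y (congrArg e h')⟩

theorem not_forall_adj_center {p q : V} (h : IsBowtie G c a b x y)
    (hN : ∀ z, G.Adj c z → z = p ∨ z = q) : False := by
  have hab := h.adj_ab.ne
  have hax := h.a_ne_x
  have hbx := h.b_ne_x
  rcases hN a h.adj_ca with rfl | rfl <;> rcases hN b h.adj_cb with rfl | rfl <;>
    rcases hN x h.adj_cx with rfl | rfl <;> simp_all

end IsBowtie

theorem bowtieFree_iff_s1 {V : Type} {G : SimpleGraph V} :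
    BowtieFree G ↔ ∀ c a b x y, ¬IsBowtie G c a b x y := by
  constructor
  · rintro hG c a b x y h
    apply hG
    refine ⟨![a, b, c, x, y], ?_, ?_⟩
    · have := h.adj_ca.ne; have := h.adj_cb.ne; have := h.adj_ab.ne; have := h.adj_cx.ne
      have := h.adj_cy.ne; have := h.adj_xy.ne; have := h.a_ne_x; have := h.a_ne_y
      have := h.b_ne_x; have := h.b_ne_y
      intro i j hij
      fin_cases i <;> fin_cases j <;> simp_all [eq_comm]
    · have := h.adj_ca; have := h.adj_cb; have := h.adj_ab; have := h.adj_cx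
      have := h.adj_cy; have := h.adj_xy
      intro i j hij
      fin_cases i <;> fin_cases j <;> simp [bowtie] at hij ⊢ <;> simp_all [G.adj_comm]
  · rintro h ⟨f, hf, hadj⟩
    exact h (f 2) (f 0) (f 1) (f 3) (f 4)
      ⟨hadj 2 0 (by simp [bowtie]), hadj 2 1 (by simp [bowtie]), hadj 0 1 (by simp [bowtie]),
        hadj 2 3 (by simp [bowtie]), hadj 2 4 (by simp [bowtie]), hadj 3 4 (by simp [bowtie]),
        hf.ne (by decide), hf.ne (by decide), hf.ne (by decide), hf.ne (by decide)⟩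

section Containment

variable {V : Type} (G : SimpleGraph V)

def ContainedInChimney (s : Set V) : Prop :=
  ∃ f : (Fin 2 ⊕ Fin 2) → V, Injective f ∧
    (∀ a b, (chimney 2).Adj a b ↔ G.Adj (f a) (f b)) ∧ s ⊆ Set.range f

def ContainedInK4 (s : Set V) : Prop :=
  ∃ f : Fin 4 → V, Injective f ∧ (∀ i j, i ≠ j → G.Adj (f i) (f j)) ∧ s ⊆ Set.range f

variable {G}

theorem ContainedInChimney.mono {s t : Set V} (hst : s ⊆ t) :
    ContainedInChimney G t → ContainedInChimney G s :=
  fun ⟨f, hf, hadj, ht⟩ => ⟨f, hf, hadj, hst.trans ht⟩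

theorem ContainedInK4.mono {s t : Set V} (hst : s ⊆ t) :
    ContainedInK4 G t → ContainedInK4 G s :=
  fun ⟨f, hf, hadj, ht⟩ => ⟨f, hf, hadj, hst.trans ht⟩

theorem containedInChimney_of_adj {a b c d : V} (hab : G.Adj a b) (hac : G.Adj a c)
    (had : G.Adj a d) (hbc : G.Adj b c) (hbd : G.Adj b d) (hcd : c ≠ d) (hncd : ¬G.Adj c d) :
    ContainedInChimney G {a, b, c, d} := by
  refine ⟨Sum.elim ![a, b] ![c, d], ?_, ?_, ?_⟩
  · have := hab.ne; have := hac.ne; have := had.ne; have := hbc.ne; have := hbd.ne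
    rintro (i | i) (j | j) hij <;> fin_cases i <;> fin_cases j <;> simp_all [eq_comm]
  · rintro (i | i) (j | j) <;> fin_cases i <;> fin_cases j <;>
      simp_all [chimney, G.adj_comm]
  · rintro v (rfl | rfl | rfl | rfl)
    exacts [⟨inl 0, rfl⟩, ⟨inl 1, rfl⟩, ⟨inr 0, rfl⟩, ⟨inr 1, rfl⟩]

theorem containedInK4_of_adj {a b c d : V} (hab : G.Adj a b) (hac : G.Adj a c)
    (had : G.Adj a d) (hbc : G.Adj b c) (hbd : G.Adj b d) (hcd : G.Adj c d) :
    ContainedInK4 G {a, b, c, d} := by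
  refine ⟨![a, b, c, d], ?_, ?_, ?_⟩
  · have := hab.ne; have := hac.ne; have := had.ne; have := hbc.ne; have := hbd.ne
    have := hcd.ne
    intro i j hij
    fin_cases i <;> fin_cases j <;> simp_all [eq_comm]
  · intro i j hij
    fin_cases i <;> fin_cases j <;> simp_all [G.adj_comm]
  · rintro v (rfl | rfl | rfl | rfl)
    exacts [⟨0, rfl⟩, ⟨1, rfl⟩, ⟨2, rfl⟩, ⟨3, rfl⟩]

end Containment

section Triangle

variable {V : Type} {G : SimpleGraph V} {v1 v2 v3 : V}

theorem commonNeighbors_subset_singleton (h12 : G.Adj v1 v2) (h13 : G.Adj v1 v3)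
    (h23 : G.Adj v2 v3) (hch : ¬ContainedInChimney G {v1, v2, v3})
    (hk4 : ¬ContainedInK4 G {v1, v2, v3}) : G.commonNeighbors v1 v3 ⊆ {v2} := by
  rintro z ⟨h1z, h3z⟩
  rw [Set.mem_singleton_iff]
  by_contra hz2
  by_cases h2z : G.Adj v2 z
  · exact hk4 <| (containedInK4_of_adj h12 h13 h1z h23 h2z h3z).mono
      (Set.insert_subset_insert (Set.insert_subset_insert (Set.singleton_subset_iff.mpr
        (Set.mem_insert _ _))))
  · refine hch <| (containedInChimney_of_adj h13 h12 h1z h23.symm h3z (Ne.symm hz2) h2z).mono ?_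
    intro v hv
    simp only [Set.mem_insert_iff, Set.mem_singleton_iff] at hv ⊢
    tauto

theorem eq_or_eq_of_adj_of_adj_of_adj (hG : BowtieFree G) (h12 : G.Adj v1 v2)
    (h13 : G.Adj v1 v3) (h23 : G.Adj v2 v3) (hch : ¬ContainedInChimney G {v1, v2, v3})
    (hk4 : ¬ContainedInK4 G {v1, v2, v3}) {x y : V} (h1x : G.Adj v1 x) (h1y : G.Adj v1 y)
    (hxy : G.Adj x y) : x = v2 ∨ y = v2 := by
  have hcommon := commonNeighbors_subset_singleton h12 h13 h23 hch hk4
  by_contra! hne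
  by_cases hx3 : x = v3
  · subst hx3
    exact hne.2 (hcommon (G.mem_commonNeighbors.mpr ⟨h1y, hxy⟩))
  by_cases hy3 : y = v3
  · subst hy3
    exact hne.1 (hcommon (G.mem_commonNeighbors.mpr ⟨h1x, hxy.symm⟩))
  exact bowtieFree_iff_s1.mp hG v1 v2 v3 x y
    ⟨h12, h13, h23, h1x, h1y, hxy, hne.1.symm, hne.2.symm, Ne.symm hx3, Ne.symm hy3⟩

end Triangle

section Extension

variable {V : Type} (G : SimpleGraph V) (v1 v2 : V)

/-- The new vertex is `inr ()`. -/
def addVertexAdjacentTo : SimpleGraph (V ⊕ Unit) :=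
  SimpleGraph.fromRel fun a b =>
    (∃ x y, a = inl x ∧ b = inl y ∧ G.Adj x y) ∨ (a = inr () ∧ (b = inl v1 ∨ b = inl v2))

variable {G v1 v2}

@[simp]
theorem addVertexAdjacentTo_adj_inl_inl {x y : V} :
    (addVertexAdjacentTo G v1 v2).Adj (inl x) (inl y) ↔ G.Adj x y := by
  simpa [addVertexAdjacentTo, G.adj_comm y x] using SimpleGraph.Adj.ne

@[simp]
theorem addVertexAdjacentTo_adj_inr {b : V ⊕ Unit} :
    (addVertexAdjacentTo G v1 v2).Adj (inr ()) b ↔ b = inl v1 ∨ b = inl v2 := by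
  simp only [addVertexAdjacentTo, SimpleGraph.fromRel_adj]
  aesop

def inlEmbedding : G ↪g addVertexAdjacentTo G v1 v2 :=
  ⟨Embedding.inl, addVertexAdjacentTo_adj_inl_inl⟩

end Extension

section Main

variable {V : Type} {G : SimpleGraph V} {v1 v2 v3 : V}

theorem not_isBowtie_addVertexAdjacentTo_inr (hG : BowtieFree G) (h12 : G.Adj v1 v2)
    (h13 : G.Adj v1 v3) (h23 : G.Adj v2 v3) (hch : ¬ContainedInChimney G {v1, v2, v3})
    (hk4 : ¬ContainedInK4 G {v1, v2, v3}) {c b x y : V ⊕ Unit}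
    (h : IsBowtie (addVertexAdjacentTo G v1 v2) c (inr ()) b x y) : False := by
  obtain ⟨x, rfl⟩ : ∃ x', x = inl x' := by
    rcases x with x | ⟨⟩
    exacts [⟨x, rfl⟩, (h.a_ne_x rfl).elim]
  obtain ⟨y, rfl⟩ : ∃ y', y = inl y' := by
    rcases y with y | ⟨⟩
    exacts [⟨y, rfl⟩, (h.a_ne_y rfl).elim]
  have center (w1 w2 : V)
      (hw : ∀ {x y}, G.Adj w1 x → G.Adj w1 y → G.Adj x y → x = w2 ∨ y = w2)
      (hc : c = inl w1) (hb : b = inl w2) : False := by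
    subst hc hb
    rcases hw (addVertexAdjacentTo_adj_inl_inl.mp h.adj_cx)
      (addVertexAdjacentTo_adj_inl_inl.mp h.adj_cy)
      (addVertexAdjacentTo_adj_inl_inl.mp h.adj_xy) with rfl | rfl
    exacts [h.b_ne_x rfl, h.b_ne_y rfl]
  rcases addVertexAdjacentTo_adj_inr.mp h.adj_ca.symm with hc | hc <;>
    rcases addVertexAdjacentTo_adj_inr.mp h.adj_ab with hb | hb
  · exact h.adj_cb.ne (hc.trans hb.symm)
  · exact center v1 v2 (eq_or_eq_of_adj_of_adj_of_adj hG h12 h13 h23 hch hk4) hc hb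
  · exact center v2 v1 (eq_or_eq_of_adj_of_adj_of_adj hG h12.symm h23 h13
      (by rwa [Set.insert_comm]) (by rwa [Set.insert_comm])) hc hb
  · exact h.adj_cb.ne (hc.trans hb.symm)

theorem bowtieFree_addVertexAdjacentTo (hG : BowtieFree G) (h12 : G.Adj v1 v2)
    (h13 : G.Adj v1 v3) (h23 : G.Adj v2 v3) (hch : ¬ContainedInChimney G {v1, v2, v3})
    (hk4 : ¬ContainedInK4 G {v1, v2, v3}) : BowtieFree (addVertexAdjacentTo G v1 v2) := by
  have hinr : ∀ {c b x y}, IsBowtie (addVertexAdjacentTo G v1 v2) c (inr ()) b x y → False :=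
    not_isBowtie_addVertexAdjacentTo_inr hG h12 h13 h23 hch hk4
  refine bowtieFree_iff_s1.mpr fun c a b x y h => ?_
  match c, a, b, x, y, h with
  | inr (), _, _, _, _, h =>
    exact h.not_forall_adj_center fun _ => addVertexAdjacentTo_adj_inr.mp
  | _, inr (), _, _, _, h => exact hinr h
  | _, _, inr (), _, _, h => exact hinr h.swap
  | _, _, _, inr (), _, h => exact hinr h.symm
  | _, _, _, _, inr (), h => exact hinr h.symm.swap
  | inl c, inl a, inl b, inl x, inl y, h =>
    exact bowtieFree_iff_s1.mp hG c a b x y (h.comap inlEmbedding)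

end Main

/-- If in a bowtie-free graph `G` the triangle `{v1,v2,v3}` is contained in no `2`-chimney
and no `K₄`, then adding a new vertex adjacent exactly to `v1` and `v2` keeps the graph
bowtie-free. -/
theorem stmt1 {V : Type} (G : SimpleGraph V) (hG : BowtieFree G) (v1 v2 v3 : V)
    (h12 : G.Adj v1 v2) (h13 : G.Adj v1 v3) (h23 : G.Adj v2 v3)
    (hch : ¬∃ f : (Fin 2 ⊕ Fin 2) → V, Function.Injective f ∧
      (∀ a b, (chimney 2).Adj a b ↔ G.Adj (f a) (f b)) ∧
      ({v1, v2, v3} : Set V) ⊆ Set.range f)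
    (hk4 : ¬∃ f : Fin 4 → V, Function.Injective f ∧
      (∀ i j, i ≠ j → G.Adj (f i) (f j)) ∧ ({v1, v2, v3} : Set V) ⊆ Set.range f) :
    BowtieFree (SimpleGraph.fromRel (fun a b : V ⊕ Unit =>
      (∃ x y, a = Sum.inl x ∧ b = Sum.inl y ∧ G.Adj x y) ∨
      (a = Sum.inr () ∧ (b = Sum.inl v1 ∨ b = Sum.inl v2)))) :=
  bowtieFree_addVertexAdjacentTo hG h12 h13 h23 hch hk4
end

section
/- Let K be a free amalgamation class of L-structures in which some structure A has two vertices u, v with Cl_A(u) not isomorphic to Cl_A(v). Then the class of all (freely) ordered structures in K does not have the ordering property: there exists an ordered structure A⃗ such that for every B ∈ K some ordering of B contains no copy of A⃗. -/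
/-!
Order `A0` with `u` first, and order any `B` so that the vertices whose closure is
isomorphic to `Cl(v)` come first. An embedding of `A0` into `B` maps `Cl(v)` isomorphically
onto the closure of the image of `v`, so that image lies in the first block; the image of
`u` does not, since otherwise `Cl(u) ≅ Cl(v)`. Hence no embedding preserves the orders.
-/

/-- A language with relation symbols and partial function symbols; functions have a
domain arity and a range arity (values are sets of `fnRng F` vertices). -/
structure PLang where
  Rel : Type
  relAr : Rel → ℕ
  Fn : Type
  fnDom : Fn → ℕ
  fnRng : Fn → ℕ

/-- A structure for a language with relations and partial functions: each function symbol
is interpreted as a partial map from `fnDom`-tuples to (unordered) sets of vertices,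
`none` meaning "undefined". -/
structure PStruc (L : PLang) (V : Type) where
  rel : ∀ R : L.Rel, Set ((Fin (L.relAr R)) → V)
  fn : ∀ F : L.Fn, ((Fin (L.fnDom F)) → V) → Option (Set V)

/-- `S` is (the vertex set of) a substructure of `A`: it is closed under all partial
functions of `A`. -/
def PStruc.ClosedIn {L : PLang} {V : Type} (A : PStruc L V) (S : Set V) : Prop :=
  ∀ (F : L.Fn) (t : Fin (L.fnDom F) → V), (∀ i, t i ∈ S) →
    ∀ s : Set V, A.fn F t = some s → s ⊆ S

/-- The closure of `B` in `A`: the smallest substructure of `A` containing `B`. -/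
def PStruc.Cl {L : PLang} {V : Type} (A : PStruc L V) (B : Set V) : Set V :=
  ⋂₀ {S : Set V | A.ClosedIn S ∧ B ⊆ S}

/-- An embedding of structures with relations and partial functions: injective, preserves
and reflects relations, preserves and reflects function domains, and commutes with
function values. -/
def IsEmb {L : PLang} {α β : Type} (A : PStruc L α) (B : PStruc L β) (f : α → β) : Prop :=
  Function.Injective f ∧
  (∀ (R : L.Rel) (t : Fin (L.relAr R) → α),
    t ∈ A.rel R ↔ (fun i => f (t i)) ∈ B.rel R) ∧
  (∀ (F : L.Fn) (t : Fin (L.fnDom F) → α),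
    ((A.fn F t).isSome ↔ (B.fn F (fun i => f (t i))).isSome) ∧
    (∀ s, A.fn F t = some s → B.fn F (fun i => f (t i)) = some (f '' s)))

/-- `C`, with embeddings `β1, β2`, is a free amalgam of `B1` and `B2` over `A`
(with respect to the embeddings `α1 : A → B1`, `α2 : A → B2`): the two copies meet
exactly in the copy of `A`, they cover `C`, and no relational tuple or
function-domain tuple of `C` uses vertices of both sides. -/
def IsFreeAmalgam {L : PLang} {a b1 b2 c : ℕ} (_A : PStruc L (Fin a))
    (B1 : PStruc L (Fin b1)) (B2 : PStruc L (Fin b2)) (C : PStruc L (Fin c))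
    (α1 : Fin a → Fin b1) (α2 : Fin a → Fin b2)
    (β1 : Fin b1 → Fin c) (β2 : Fin b2 → Fin c) : Prop :=
  IsEmb B1 C β1 ∧ IsEmb B2 C β2 ∧ (∀ x, β1 (α1 x) = β2 (α2 x)) ∧
  (∀ x1 x2, β1 x1 = β2 x2 → ∃ x, x1 = α1 x ∧ x2 = α2 x) ∧
  (∀ z, z ∈ Set.range β1 ∪ Set.range β2) ∧
  (∀ (R : L.Rel) (t : Fin (L.relAr R) → Fin c), t ∈ C.rel R →
    (∀ i, t i ∈ Set.range β1) ∨ (∀ i, t i ∈ Set.range β2)) ∧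
  (∀ (F : L.Fn) (t : Fin (L.fnDom F) → Fin c), (C.fn F t).isSome →
    (∀ i, t i ∈ Set.range β1) ∨ (∀ i, t i ∈ Set.range β2))

/-- A free amalgamation class of finite structures: hereditary (closed under substructures
up to isomorphism), joint embedding, and free amalgamation. -/
def FreeAmalgClass {L : PLang} (K : ∀ n : ℕ, PStruc L (Fin n) → Prop) : Prop :=
  (∀ n A, K n A → ∀ (m : ℕ) (B : PStruc L (Fin m)) (f : Fin m → Fin n),
    IsEmb B A f → K m B) ∧
  (∀ n A m B, K n A → K m B →
    ∃ (p : ℕ) (C : PStruc L (Fin p)) (f : Fin n → Fin p) (g : Fin m → Fin p),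
      K p C ∧ IsEmb A C f ∧ IsEmb B C g) ∧
  (∀ (a : ℕ) (A : PStruc L (Fin a)) (b1 : ℕ) (B1 : PStruc L (Fin b1))
      (b2 : ℕ) (B2 : PStruc L (Fin b2)) (α1 : Fin a → Fin b1) (α2 : Fin a → Fin b2),
    K a A → K b1 B1 → K b2 B2 → IsEmb A B1 α1 → IsEmb A B2 α2 →
    ∃ (c : ℕ) (C : PStruc L (Fin c)) (β1 : Fin b1 → Fin c) (β2 : Fin b2 → Fin c),
      K c C ∧ IsFreeAmalgam A B1 B2 C α1 α2 β1 β2)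

/-- An order-preserving embedding between linearly ordered structures. -/
def OrdEmb {L : PLang} {α β : Type} (A : PStruc L α) (rA : α → α → Prop)
    (B : PStruc L β) (rB : β → β → Prop) (f : α → β) : Prop :=
  IsEmb A B f ∧ ∀ x y, rA x y → rB (f x) (f y)

/-- An isomorphism (within the structure `A`) between the induced substructures on the
closed sets `S` and `T`: an injection of `S` onto `T` preserving relations, function
domains and function values. -/
def SubIso {L : PLang} {V : Type} (A : PStruc L V) (S T : Set V) : Prop :=
  ∃ g : V → V, Set.InjOn g S ∧ g '' S = T ∧
    (∀ (R : L.Rel) (t : Fin (L.relAr R) → V), (∀ i, t i ∈ S) →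
      (t ∈ A.rel R ↔ (fun i => g (t i)) ∈ A.rel R)) ∧
    (∀ (F : L.Fn) (t : Fin (L.fnDom F) → V), (∀ i, t i ∈ S) →
      ((A.fn F t).isSome ↔ (A.fn F (fun i => g (t i))).isSome) ∧
      (∀ s, A.fn F t = some s → A.fn F (fun i => g (t i)) = some (g '' s)))

def IsIsoOn {L : PLang} {α β : Type} (A : PStruc L α) (B : PStruc L β) (g : α → β)
    (S : Set α) (T : Set β) : Prop :=
  Set.InjOn g S ∧ g '' S = T ∧
    (∀ (R : L.Rel) (t : Fin (L.relAr R) → α), (∀ i, t i ∈ S) →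
      (t ∈ A.rel R ↔ (fun i => g (t i)) ∈ B.rel R)) ∧
    (∀ (F : L.Fn) (t : Fin (L.fnDom F) → α), (∀ i, t i ∈ S) →
      ((A.fn F t).isSome ↔ (B.fn F (fun i => g (t i))).isSome) ∧
      (∀ s, A.fn F t = some s → B.fn F (fun i => g (t i)) = some (g '' s)))

section Closure

variable {L : PLang} {α β γ : Type}

namespace PStruc

lemma closedIn_cl (A : PStruc L α) (S : Set α) : A.ClosedIn (A.Cl S) := by
  intro F t ht s hs x hx
  exact Set.mem_sInter.mpr fun U hU => hU.1 F t (fun i => Set.mem_sInter.mp (ht i) U hU) s hs hx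

lemma subset_cl (A : PStruc L α) (S : Set α) : S ⊆ A.Cl S :=
  fun _ hx => Set.mem_sInter.mpr fun _ hU => hU.2 hx

lemma cl_subset {A : PStruc L α} {S U : Set α} (hU : A.ClosedIn U) (hSU : S ⊆ U) :
    A.Cl S ⊆ U :=
  Set.sInter_subset_of_mem ⟨hU, hSU⟩

end PStruc

lemma subIso_iff_exists_isIsoOn {A : PStruc L α} {S T : Set α} :
    SubIso A S T ↔ ∃ g, IsIsoOn A A g S T :=
  Iff.rfl

namespace IsEmb

variable {A : PStruc L α} {C : PStruc L β} {e : α → β}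

lemma closedIn_image (he : IsEmb A C e) {S : Set α} (hS : A.ClosedIn S) :
    C.ClosedIn (e '' S) := by
  intro F t ht s hs
  choose x hxS hxt using ht
  obtain rfl : t = fun i => e (x i) := funext fun i => (hxt i).symm
  obtain ⟨s₀, hs₀⟩ := Option.isSome_iff_exists.mp ((he.2.2 F x).1.mpr (by rw [hs]; rfl))
  obtain rfl : s = e '' s₀ := Option.some.inj (hs.symm.trans ((he.2.2 F x).2 s₀ hs₀))
  exact Set.image_mono (hS F x hxS s₀ hs₀)

lemma closedIn_preimage (he : IsEmb A C e) {U : Set β} (hU : C.ClosedIn U) :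
    A.ClosedIn (e ⁻¹' U) := fun F t ht s hs =>
  Set.image_subset_iff.mp (hU F _ ht _ ((he.2.2 F t).2 s hs))

lemma cl_image (he : IsEmb A C e) (S : Set α) : C.Cl (e '' S) = e '' A.Cl S :=
  (C.cl_subset (he.closedIn_image (A.closedIn_cl S)) (Set.image_mono (A.subset_cl S))).antisymm
    (Set.image_subset_iff.mpr (A.cl_subset (he.closedIn_preimage (C.closedIn_cl _))
      (Set.image_subset_iff.mp (C.subset_cl _))))

lemma isIsoOn_image (he : IsEmb A C e) (S : Set α) : IsIsoOn A C e S (e '' S) :=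
  ⟨he.1.injOn, rfl, fun R t _ => he.2.1 R t, fun F t _ => he.2.2 F t⟩

lemma isIsoOn_cl (he : IsEmb A C e) (x : α) : IsIsoOn A C e (A.Cl {x}) (C.Cl {e x}) := by
  rw [← Set.image_singleton, he.cl_image]
  exact he.isIsoOn_image _

end IsEmb

namespace IsIsoOn

variable {A : PStruc L α} {B : PStruc L β} {C : PStruc L γ} {g : α → β} {h : β → γ}
  {S : Set α} {T : Set β} {U : Set γ}

lemma mapsTo (hg : IsIsoOn A B g S T) : Set.MapsTo g S T :=
  fun _ hx => hg.2.1 ▸ Set.mem_image_of_mem g hx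

lemma comp (hh : IsIsoOn B C h T U) (hg : IsIsoOn A B g S T) : IsIsoOn A C (h ∘ g) S U := by
  refine ⟨hh.1.comp hg.1 hg.mapsTo, by rw [Set.image_comp, hg.2.1, hh.2.1], ?_, ?_⟩
  · intro R t ht
    exact (hg.2.2.1 R t ht).trans (hh.2.2.1 R _ fun i => hg.mapsTo (ht i))
  · intro F t ht
    have hgt := hg.2.2.2 F t ht
    have hht := hh.2.2.2 F _ fun i => hg.mapsTo (ht i)
    refine ⟨hgt.1.trans hht.1, fun s hs => ?_⟩
    rw [Set.image_comp]
    exact hht.2 _ (hgt.2 s hs)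

/-- `S` must be closed: a function value at a tuple of `T` is the image of a value at a
tuple of `S`, which lies in `S`, where `g` can be inverted. -/
lemma symm [Nonempty α] (hg : IsIsoOn A B g S T) (hS : A.ClosedIn S) :
    IsIsoOn B A (Function.invFunOn g S) T S := by
  set g' := Function.invFunOn g S
  have hbij : Set.BijOn g S T := hg.2.1 ▸ hg.1.bijOn_image
  have hinv : Set.InvOn g' g S T := hbij.invOn_invFunOn
  have hbij' : Set.BijOn g' T S := hbij.symm hinv.symm
  have hback : ∀ {n} (t : Fin n → β), (∀ i, t i ∈ T) → (fun i => g (g' (t i))) = t :=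
    fun t ht => funext fun i => hinv.2 (ht i)
  have hmaps : ∀ {n} (t : Fin n → β), (∀ i, t i ∈ T) → ∀ i, g' (t i) ∈ S :=
    fun t ht i => hbij'.mapsTo (ht i)
  refine ⟨hbij'.injOn, hbij'.image_eq, ?_, ?_⟩
  · intro R t ht
    conv_lhs => rw [← hback t ht]
    exact (hg.2.2.1 R _ (hmaps t ht)).symm
  · intro F t ht
    have hgt := hg.2.2.2 F _ (hmaps t ht)
    rw [hback t ht] at hgt
    refine ⟨hgt.1.symm, fun s hs => ?_⟩
    obtain ⟨s₀, hs₀⟩ := Option.isSome_iff_exists.mp (hgt.1.mpr (by rw [hs]; rfl))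
    obtain rfl : s = g '' s₀ := Option.some.inj (hs.symm.trans (hgt.2 s₀ hs₀))
    rw [hs₀, Set.LeftInvOn.image_image (hinv.1.mono (hS F _ (hmaps t ht) s₀ hs₀))]

end IsIsoOn

end Closure

section OrderWithFirst

variable {α : Type} [LinearOrder α] (P : α → Prop) [DecidablePred P]

def orderWithFirst (x y : α) : Prop :=
  toLex (!decide (P x), x) ≤ toLex (!decide (P y), y)

lemma isLinearOrder_orderWithFirst : IsLinearOrder α (orderWithFirst P) :=
  letI : LinearOrder α := LinearOrder.lift' (fun x => toLex (!decide (P x), x))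
    fun _ _ h => congrArg Prod.snd (toLex.injective h)
  inferInstanceAs (IsLinearOrder α (· ≤ ·))

variable {P}

lemma not_orderWithFirst {x y : α} (hx : ¬ P x) (hy : P y) : ¬ orderWithFirst P x y := by
  simp [orderWithFirst, Prod.Lex.toLex_le_toLex, hx, hy]

lemma orderWithFirst_eq_left (x y : α) : orderWithFirst (· = x) x y := by
  by_cases hy : y = x
  · exact hy ▸ le_rfl
  · simp [orderWithFirst, Prod.Lex.toLex_le_toLex, hy]

end OrderWithFirst

theorem stmt7_general {L : PLang} (K : ∀ n : ℕ, PStruc L (Fin n) → Prop)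
    (n0 : ℕ) (A0 : PStruc L (Fin n0)) (hA0 : K n0 A0) (u v : Fin n0)
    (hniso : ¬ SubIso A0 (PStruc.Cl A0 {u}) (PStruc.Cl A0 {v})) :
    ∃ (n : ℕ) (A : PStruc L (Fin n)) (rA : Fin n → Fin n → Prop),
      K n A ∧ IsLinearOrder (Fin n) rA ∧
      ∀ (m : ℕ) (B : PStruc L (Fin m)), K m B →
        ∃ rB : Fin m → Fin m → Prop, IsLinearOrder (Fin m) rB ∧
          ¬∃ f : Fin n → Fin m, OrdEmb A rA B rB f := by
  classical
  have : Nonempty (Fin n0) := ⟨u⟩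
  refine ⟨n0, A0, orderWithFirst (· = u), hA0, isLinearOrder_orderWithFirst _,
    fun m B _ => ⟨orderWithFirst fun x => ∃ g, IsIsoOn A0 B g (A0.Cl {v}) (B.Cl {x}),
      isLinearOrder_orderWithFirst _, ?_⟩⟩
  rintro ⟨f, hf, hord⟩
  refine not_orderWithFirst ?_ ⟨f, hf.isIsoOn_cl v⟩ (hord u v (orderWithFirst_eq_left u v))
  rintro ⟨g, hg⟩
  have hvu := (hf.isIsoOn_cl u).symm (A0.closedIn_cl _) |>.comp hg
  exact hniso (subIso_iff_exists_isIsoOn.mpr ⟨_, hvu.symm (A0.closedIn_cl _)⟩)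

/-- If a free amalgamation class `K` contains a structure with two vertices whose closures
are not isomorphic, then the class of freely ordered structures of `K` fails the ordering
property: there is an ordered `A` such that for every `B ∈ K` some linear ordering of `B`
contains no ordered copy of `A`. -/
theorem stmt7 {L : PLang} (K : ∀ n : ℕ, PStruc L (Fin n) → Prop)
    (hK : FreeAmalgClass K)
    (n0 : ℕ) (A0 : PStruc L (Fin n0)) (hA0 : K n0 A0) (u v : Fin n0)
    (hniso : ¬ SubIso A0 (PStruc.Cl A0 {u}) (PStruc.Cl A0 {v})) :
    ∃ (n : ℕ) (A : PStruc L (Fin n)) (rA : Fin n → Fin n → Prop),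
      K n A ∧ IsLinearOrder (Fin n) rA ∧
      ∀ (m : ℕ) (B : PStruc L (Fin m)), K m B →
        ∃ rB : Fin m → Fin m → Prop, IsLinearOrder (Fin m) rB ∧
          ¬∃ f : Fin n → Fin m, OrdEmb A rA B rB f :=
  stmt7_general K n0 A0 hA0 u v hniso
end

section
/- Let Σ be a finite alphabet and N the Hales-Jewett number guaranteeing a monochromatic combinatorial line for every 2-colouring of Σ^N. Let B be an A-partite L-system and let Ã_1,...,Ã_t enumerate all copies of A in B. Construct C with parts X^i_C consisting of all functions f: {1,...,N} → X^i_B, relations holding coordinatewise, and function values defined coordinatewise when defined at all coordinates. Then for every combinatorial line L = (ω, h) in {1,...,t}^N, the map e_L sending v ∈ X^p_B to the function with e_L(v)(i) = v for i ∈ ω and e_L(v)(i) = the unique vertex of Ã_{h(i)} ∩ X^p_B otherwise, is an embedding of A-partite systems B → C. -/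
/-- An `A`-partite `L`-system over a structure `A` with vertex set `Fin a`: a structure
`str` with a projection `part` onto `A` which is a homomorphism, and such that every
relational tuple, and every function-domain tuple together with its value, is transversal
(meets each part in at most one vertex). -/
structure Partite {L : PLang} {a : ℕ} (A : PStruc L (Fin a)) (β : Type) where
  str : PStruc L β
  part : β → Fin a
  hom_rel : ∀ (R : L.Rel) (t : Fin (L.relAr R) → β),
    t ∈ str.rel R → (fun i => part (t i)) ∈ A.rel R
  hom_fn : ∀ (F : L.Fn) (t : Fin (L.fnDom F) → β) (s : Set β),
    str.fn F t = some s → A.fn F (fun i => part (t i)) = some (part '' s)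
  trans_rel : ∀ (R : L.Rel) (t : Fin (L.relAr R) → β), t ∈ str.rel R →
    ∀ i j, part (t i) = part (t j) → t i = t j
  trans_fn : ∀ (F : L.Fn) (t : Fin (L.fnDom F) → β) (s : Set β), str.fn F t = some s →
    (∀ i j, part (t i) = part (t j) → t i = t j) ∧
    (∀ x ∈ s, ∀ i, part x = part (t i) → x = t i) ∧
    (∀ x ∈ s, ∀ y ∈ s, part x = part y → x = y)

/-- Vertices of the `N`-th power of the partite system `B`: functions `Fin N → β`
taking values in a single part of `B`. -/
def PowV {L : PLang} {a : ℕ} {A : PStruc L (Fin a)} {β : Type}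
    (B : Partite A β) (N : ℕ) : Type :=
  {f : Fin N → β // ∀ i j, B.part (f i) = B.part (f j)}

/-- The power structure: relations hold coordinatewise, and a function value is defined
iff it is defined at every coordinate, in which case it is the set of part-consistent
coordinatewise selectors of the coordinate values. -/
def powStr {L : PLang} {a : ℕ} {A : PStruc L (Fin a)} {β : Type}
    (B : Partite A β) (N : ℕ) : PStruc L (PowV B N) where
  rel R := {t | ∀ i : Fin N, (fun j => (t j).1 i) ∈ B.str.rel R}
  fn F t :=
    if h : ∀ i : Fin N, (B.str.fn F (fun j => (t j).1 i)).isSome then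
      some {g : PowV B N | ∀ i : Fin N, g.1 i ∈ (B.str.fn F (fun j => (t j).1 i)).get (h i)}
    else none

/-- The projection of the power system to the parts of `A` (requires `0 < N`). -/
def powPart {L : PLang} {a : ℕ} {A : PStruc L (Fin a)} {β : Type}
    (B : Partite A β) (N : ℕ) (hN : 0 < N) : PowV B N → Fin a :=
  fun g => B.part (g.1 ⟨0, hN⟩)


/-!
Each coordinate `v ↦ e(v)(i)` of `e` is a homomorphism `B → B` preserving parts: the identity
for `i ∈ ω`, and the retraction `v ↦ copies (h i) (part v)` of `B` onto a copy of `A` otherwise.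
A map into the power whose coordinates are such homomorphisms, one of them the identity, is an
embedding: the identity coordinate reflects relations and function domains and gives
injectivity, and transversality of function values forces every selector of the coordinatewise
values to come from a single vertex.
-/

def IsHom {L : PLang} {α β : Type} (A : PStruc L α) (B : PStruc L β) (f : α → β) : Prop :=
  (∀ (R : L.Rel) (t : Fin (L.relAr R) → α), t ∈ A.rel R → (fun i => f (t i)) ∈ B.rel R) ∧
  ∀ (F : L.Fn) (t : Fin (L.fnDom F) → α) (s : Set α),
    A.fn F t = some s → B.fn F (fun i => f (t i)) = some (f '' s)

namespace IsHom

variable {L : PLang} {α β γ : Type}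

theorem id (A : PStruc L α) : IsHom A A id :=
  ⟨fun _ _ ht => ht, fun _ _ s hs => by rw [Set.image_id]; exact hs⟩

theorem comp {A : PStruc L α} {B : PStruc L β} {C : PStruc L γ} {g : β → γ} {f : α → β}
    (hg : IsHom B C g) (hf : IsHom A B f) : IsHom A C (g ∘ f) :=
  ⟨fun R t ht => hg.1 R _ (hf.1 R t ht),
    fun F t s hs => by rw [Set.image_comp]; exact hg.2 F _ _ (hf.2 F t s hs)⟩

end IsHom

theorem IsEmb.isHom {L : PLang} {α β : Type} {A : PStruc L α} {B : PStruc L β} {f : α → β}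
    (hf : IsEmb A B f) : IsHom A B f :=
  ⟨fun R t => (hf.2.1 R t).mp, fun F t => (hf.2.2 F t).2⟩

namespace Partite

variable {L : PLang} {a : ℕ} {A : PStruc L (Fin a)} {β : Type} (B : Partite A β)

theorem isHom_part : IsHom B.str A B.part :=
  ⟨B.hom_rel, B.hom_fn⟩

theorem powStr_fn_isSome_iff {N : ℕ} (F : L.Fn) (t : Fin (L.fnDom F) → PowV B N) :
    ((powStr B N).fn F t).isSome ↔ ∀ i, (B.str.fn F (fun j => (t j).1 i)).isSome := by
  simp only [powStr]
  split_ifs with h <;> simp [h]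

theorem powStr_fn_eq_some {N : ℕ} (F : L.Fn) (t : Fin (L.fnDom F) → PowV B N)
    (S : Fin N → Set β) (hS : ∀ i, B.str.fn F (fun j => (t j).1 i) = some (S i)) :
    (powStr B N).fn F t = some {g | ∀ i, g.1 i ∈ S i} := by
  simp only [powStr, hS, Option.isSome_some, implies_true, dite_true, Option.get_some]

section Coordinates

variable {B} {N : ℕ} (e : β → PowV B N) (i₀ : Fin N) (he : ∀ v, (e v).1 i₀ = v)
include he

/-- All coordinates of a selector lie over one part, so by transversality of `s` each of them
comes from the same vertex of `s`, its coordinate `i₀`. -/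
theorem setOf_forall_mem_image_coord {s : Set β}
    (hs : ∀ x ∈ s, ∀ y ∈ s, B.part x = B.part y → x = y) :
    {g : PowV B N | ∀ i, g.1 i ∈ (fun v => (e v).1 i) '' s} = e '' s := by
  ext g
  constructor
  · intro hg
    obtain ⟨x, hx, hgx⟩ := hg i₀
    obtain rfl : x = g.1 i₀ := (he x).symm.trans hgx
    refine ⟨g.1 i₀, hx, Subtype.ext (funext fun i => ?_)⟩
    obtain ⟨y, hy, hgy : (e y).1 i = g.1 i⟩ := hg i
    have hpart : B.part y = B.part (g.1 i₀) := by
      rw [← he y, (e y).2 i₀ i, hgy, g.2 i i₀]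
    rw [← hgy, hs y hy _ hx hpart]
  · rintro ⟨x, hx, rfl⟩ i
    exact ⟨x, hx, rfl⟩

theorem isEmb_powStr_of_isHom_coord (hcoord : ∀ i, IsHom B.str B.str fun v => (e v).1 i) :
    IsEmb B.str (powStr B N) e := by
  refine ⟨fun u v huv => by rw [← he u, ← he v, huv], fun R t => ⟨fun ht i => ?_, fun ht => ?_⟩,
    fun F t => ⟨⟨fun ht => ?_, fun ht => ?_⟩, fun s hs => ?_⟩⟩
  · exact (hcoord i).1 R t ht
  · simpa only [he] using ht i₀
  · obtain ⟨s, hs⟩ := Option.isSome_iff_exists.mp ht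
    exact (powStr_fn_isSome_iff B F _).mpr fun i => by rw [(hcoord i).2 F t s hs]; rfl
  · simpa only [he] using (powStr_fn_isSome_iff B F _).mp ht i₀
  · rw [powStr_fn_eq_some B F _ _ fun i => (hcoord i).2 F t s hs,
      setOf_forall_mem_image_coord e i₀ he (B.trans_fn F t s hs).2.2]

end Coordinates

end Partite

/-- Given an enumeration `copies` of (some) partite copies of `A` in `B`, every
combinatorial line `(ω, h)` (with `ω ≠ ∅`) induces a map `e` into the power system,
with `e(v)(i) = v` for `i ∈ ω` and `e(v)(i)` the unique vertex of the copy `copies (h i)`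
in the part of `v` otherwise; any such map is an embedding of `A`-partite systems. -/
theorem stmt9 {L : PLang} {a : ℕ} {A : PStruc L (Fin a)} {β : Type}
    (B : Partite A β) (N t : ℕ) (hN : 0 < N)
    (copies : Fin t → (Fin a → β))
    (hcop : ∀ k, IsEmb A B.str (copies k) ∧ ∀ p, B.part (copies k p) = p)
    (ω : Set (Fin N)) (hω : ω.Nonempty) (h : Fin N → Fin t)
    (e : β → PowV B N)
    (he1 : ∀ v, ∀ i ∈ ω, (e v).1 i = v)
    (he2 : ∀ v, ∀ i, i ∉ ω → (e v).1 i = copies (h i) (B.part v)) :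
    IsEmb B.str (powStr B N) e ∧ ∀ v, powPart B N hN (e v) = B.part v := by
  obtain ⟨i₀, hi₀⟩ := hω
  have hcoord : ∀ i, IsHom B.str B.str fun v => (e v).1 i := by
    intro i
    by_cases hi : i ∈ ω
    · rw [show (fun v => (e v).1 i) = id from funext fun v => he1 v i hi]
      exact IsHom.id B.str
    · rw [show (fun v => (e v).1 i) = copies (h i) ∘ B.part from funext fun v => he2 v i hi]
      exact (hcop (h i)).1.isHom.comp B.isHom_part
  refine ⟨Partite.isEmb_powStr_of_isHom_coord e i₀ (fun v => he1 v i₀ hi₀) hcoord, fun v => ?_⟩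
  rw [powPart, (e v).2, he1 v i₀ hi₀]
end

section
/- Let C be the A-partite power system constructed from an A-partite system B by taking as vertices of part i all functions {1,...,N} → X^i_B, with relations and functions defined coordinatewise. If every irreducible subsystem of B is transversal, then every irreducible subsystem of C is transversal. -/
/-- The closed set `S` carries an irreducible substructure of `D`: it cannot be written
as a free amalgamation of two proper substructures (two proper closed subsets covering
`S` such that no relational or function-domain tuple of `D` inside `S` meets both
parts outside the intersection). -/
def IrredSub {L : PLang} {V : Type} (D : PStruc L V) (S : Set V) : Prop :=
  D.ClosedIn S ∧
  ¬∃ S1 S2 : Set V, S1 ⊆ S ∧ S2 ⊆ S ∧ S1 ≠ S ∧ S2 ≠ S ∧ S1 ∪ S2 = S ∧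
    D.ClosedIn S1 ∧ D.ClosedIn S2 ∧
    (∀ (R : L.Rel) (t : Fin (L.relAr R) → V), t ∈ D.rel R → (∀ i, t i ∈ S) →
      ((∀ i, t i ∈ S1) ∨ (∀ i, t i ∈ S2))) ∧
    (∀ (F : L.Fn) (t : Fin (L.fnDom F) → V), (D.fn F t).isSome → (∀ i, t i ∈ S) →
      ((∀ i, t i ∈ S1) ∨ (∀ i, t i ∈ S2)))

/-! A homomorphism carries an irreducible substructure onto a set whose closure is again
irreducible: a splitting of that closure pulls back along the homomorphism to a splitting of
the original substructure. Every coordinate projection of the power system is a homomorphism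
onto `B`, so the closure of each coordinate image of an irreducible `S` is transversal. Two
vertices of `S` in the same part then lie in the same part at every coordinate, hence agree
at every coordinate. -/

namespace PStruc

variable {L : PLang} {V W : Type}

theorem closedIn_cl_s10 (D : PStruc L V) (X : Set V) : D.ClosedIn (D.Cl X) :=
  fun F t ht s hs _ hx => Set.mem_sInter.mpr fun T hT =>
    hT.1 F t (fun i => Set.mem_sInter.mp (ht i) T hT) s hs hx

theorem subset_cl_s10 (D : PStruc L V) (X : Set V) : X ⊆ D.Cl X :=
  fun _ hx => Set.mem_sInter.mpr fun _ hT => hT.2 hx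

theorem cl_subset_s10 (D : PStruc L V) {X T : Set V} (hT : D.ClosedIn T) (hXT : X ⊆ T) :
    D.Cl X ⊆ T :=
  Set.sInter_subset_of_mem ⟨hT, hXT⟩

structure IsHom (D : PStruc L V) (E : PStruc L W) (φ : V → W) : Prop where
  map_rel : ∀ (R : L.Rel) (t : Fin (L.relAr R) → V), t ∈ D.rel R → φ ∘ t ∈ E.rel R
  map_fn : ∀ (F : L.Fn) (t : Fin (L.fnDom F) → V) (s : Set V), D.fn F t = some s →
    ∃ s', E.fn F (φ ∘ t) = some s' ∧ Set.MapsTo φ s s'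

variable {D : PStruc L V} {E : PStruc L W} {φ : V → W}

theorem IsHom.isSome_fn (hφ : D.IsHom E φ) {F : L.Fn} {t : Fin (L.fnDom F) → V}
    (ht : (D.fn F t).isSome) : (E.fn F (φ ∘ t)).isSome := by
  obtain ⟨s, hs⟩ := Option.isSome_iff_exists.mp ht
  obtain ⟨s', hs', -⟩ := hφ.map_fn F t s hs
  simp [hs']

theorem IsHom.closedIn_inter_preimage (hφ : D.IsHom E φ) {S : Set V} {T : Set W}
    (hS : D.ClosedIn S) (hT : E.ClosedIn T) : D.ClosedIn (S ∩ φ ⁻¹' T) := by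
  intro F t ht s hs x hx
  obtain ⟨s', hs', hmaps⟩ := hφ.map_fn F t s hs
  exact ⟨hS F t (fun i => (ht i).1) s hs hx, hT F (φ ∘ t) (fun i => (ht i).2) s' hs' (hmaps hx)⟩

end PStruc

theorem IrredSub.cl_image {L : PLang} {V W : Type} {D : PStruc L V} {E : PStruc L W}
    {φ : V → W} (hφ : D.IsHom E φ) {S : Set V} (hS : IrredSub D S) :
    IrredSub E (E.Cl (φ '' S)) := by
  refine ⟨E.closedIn_cl_s10 _, ?_⟩
  rintro ⟨T1, T2, hT1, hT2, hT1ne, hT2ne, hcup, hc1, hc2, hrel, hfn⟩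
  have image_subset : φ '' S ⊆ T1 ∪ T2 := hcup ▸ E.subset_cl_s10 _
  have proper : ∀ T', E.ClosedIn T' → T' ⊆ E.Cl (φ '' S) → T' ≠ E.Cl (φ '' S) →
      S ∩ φ ⁻¹' T' ≠ S := by
    intro T' hc hsub hne heq
    refine hne (hsub.antisymm (E.cl_subset_s10 hc ?_))
    rintro _ ⟨x, hx, rfl⟩
    rw [← heq] at hx
    exact hx.2
  have lift : ∀ {n : ℕ} (t : Fin n → V), (∀ i, t i ∈ S) →
      ((∀ i, φ (t i) ∈ T1) ∨ ∀ i, φ (t i) ∈ T2) →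
      (∀ i, t i ∈ S ∩ φ ⁻¹' T1) ∨ ∀ i, t i ∈ S ∩ φ ⁻¹' T2 := fun t hts =>
    Or.imp (fun h i => ⟨hts i, h i⟩) (fun h i => ⟨hts i, h i⟩)
  have mem_cl : ∀ {n : ℕ} (t : Fin n → V), (∀ i, t i ∈ S) → ∀ i, φ (t i) ∈ E.Cl (φ '' S) :=
    fun t hts i => E.subset_cl_s10 _ ⟨t i, hts i, rfl⟩
  refine hS.2 ⟨S ∩ φ ⁻¹' T1, S ∩ φ ⁻¹' T2, Set.inter_subset_left, Set.inter_subset_left,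
    proper T1 hc1 hT1 hT1ne, proper T2 hc2 hT2 hT2ne, ?_,
    hφ.closedIn_inter_preimage hS.1 hc1, hφ.closedIn_inter_preimage hS.1 hc2,
    fun R t ht hts => lift t hts (hrel R _ (hφ.map_rel R t ht) (mem_cl t hts)),
    fun F t ht hts => lift t hts (hfn F _ (hφ.isSome_fn ht) (mem_cl t hts))⟩
  rw [← Set.inter_union_distrib_left]
  exact Set.inter_eq_left.mpr fun x hx => image_subset ⟨x, hx, rfl⟩

section Power

variable {L : PLang} {a : ℕ} {A : PStruc L (Fin a)} {β : Type}

theorem powStr_fn_eq_some {B : Partite A β} {N : ℕ} {F : L.Fn}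
    {t : Fin (L.fnDom F) → PowV B N} {s : Set (PowV B N)} (hs : (powStr B N).fn F t = some s) :
    ∃ h : ∀ k : Fin N, (B.str.fn F (fun j => (t j).1 k)).isSome,
      s = {g : PowV B N | ∀ k, g.1 k ∈ (B.str.fn F (fun j => (t j).1 k)).get (h k)} := by
  simp only [powStr] at hs
  split at hs
  · exact ⟨_, (Option.some_injective _ hs).symm⟩
  · simp at hs

theorem isHom_powStr_eval (B : Partite A β) {N : ℕ} (i : Fin N) :
    (powStr B N).IsHom B.str (fun g => g.1 i) where
  map_rel _ _ ht := ht i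
  map_fn F t s hs := by
    obtain ⟨h, rfl⟩ := powStr_fn_eq_some hs
    exact ⟨_, (Option.some_get (h i)).symm, fun _ hg => hg i⟩

end Power

/-- If every irreducible subsystem of the partite system `B` is transversal (the
projection is injective on it), then every irreducible subsystem of the power system
of `B` is transversal. -/
theorem stmt10 {L : PLang} {a : ℕ} {A : PStruc L (Fin a)} {β : Type}
    (B : Partite A β) (N : ℕ) (hN : 0 < N)
    (hB : ∀ S : Set β, IrredSub B.str S → Set.InjOn B.part S) :
    ∀ S : Set (PowV B N), IrredSub (powStr B N) S →
      Set.InjOn (powPart B N hN) S := by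
  intro S hS f hf g hg hfg
  have same_part : ∀ i, B.part (f.1 i) = B.part (g.1 i) := fun i =>
    (f.2 i ⟨0, hN⟩).trans (hfg.trans (g.2 ⟨0, hN⟩ i))
  refine Subtype.ext (funext fun i => ?_)
  exact hB _ (hS.cl_image (isHom_powStr_eval B i))
    (B.str.subset_cl_s10 _ ⟨f, hf, rfl⟩) (B.str.subset_cl_s10 _ ⟨g, hg, rfl⟩) (same_part i)
end

section
/- A finite graph G is orientable so that every vertex has out-degree at most k if and only if every subgraph H of G satisfies |E(H)| ≤ k·|V(H)| (equivalently, δ(H) = k|V(H)| − |E(H)| ≥ 0 for all subgraphs H). -/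
/-!
Orienting an edge `uv` out of `u` charges it to `u`. If every vertex is charged at most `k` times,
the edges inside `s` are charged to vertices of `s`, so there are at most `k * |s|` of them.
Conversely, give every vertex `k` slots and ask, by Hall's theorem, for an injective assignment of
edges to slots of their own endpoints: a family `S` of edges spans a vertex set `s` with at least
`|S|` edges inside, and by sparsity these are at most `k * |s|`, the number of slots `S` may use.
Orienting each edge out of the vertex owning its slot gives out-degrees at most `k`.
-/

open Function

theorem ncard_setOf_fst_mem_le {α β : Type*} [Finite α] [Finite β] (R : α → β → Prop) {k : ℕ}
    (hR : ∀ a, {b | R a b}.ncard ≤ k) (s : Set α) :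
    {p : α × β | p.1 ∈ s ∧ R p.1 p.2}.ncard ≤ k * s.ncard := by
  classical
  have := Fintype.ofFinite α
  have := Fintype.ofFinite β
  rw [Set.ncard_eq_toFinset_card', Set.ncard_eq_toFinset_card' s]
  refine Finset.card_le_mul_card_image_of_maps_to (f := Prod.fst) (fun p hp => ?_) k
    fun a _ => le_trans ?_ (hR a)
  · simp only [Set.mem_toFinset] at hp ⊢
    exact hp.1
  · rw [Set.ncard_eq_toFinset_card']
    refine Finset.card_le_card_of_injOn Prod.snd (fun p hp => ?_) fun p hp q hq h => ?_
    · simp only [Finset.coe_filter, Set.mem_toFinset, Set.mem_ofPred_eq, Finset.mem_coe] at hp ⊢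
      exact hp.2 ▸ hp.1.2
    · simp only [Finset.coe_filter, Set.mem_toFinset, Set.mem_ofPred_eq] at hp hq
      exact Prod.ext (hp.2.trans hq.2.symm) h

namespace SimpleGraph

variable {V : Type*} (G : SimpleGraph V)

theorem ncard_edges_within_le_ncard_arcs [Finite V] {E : V → V → Prop}
    (hE : ∀ u v, G.Adj u v → E u v ∨ E v u) (s : Set V) :
    {e : Sym2 V | e ∈ G.edgeSet ∧ ∀ v ∈ e, v ∈ s}.ncard ≤
      {p : V × V | p.1 ∈ s ∧ E p.1 p.2}.ncard := by
  refine (Set.ncard_le_ncard ?_ (Set.toFinite _)).trans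
    (Set.ncard_image_le (f := fun p : V × V => s(p.1, p.2)) (Set.toFinite _))
  rintro ⟨u, v⟩ ⟨huv, hs⟩
  rcases hE u v huv with h | h
  · exact ⟨(u, v), ⟨hs u (Sym2.mem_mk_left u v), h⟩, rfl⟩
  · exact ⟨(v, u), ⟨hs v (Sym2.mem_mk_right u v), h⟩, Sym2.eq_swap⟩

def orientationOfTail (tail : G.edgeSet → V) (u v : V) : Prop :=
  ∃ h : G.Adj u v, tail ⟨s(u, v), h⟩ = u

variable {G}

theorem orientationOfTail_adj {tail : G.edgeSet → V} {u v : V}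
    (h : G.orientationOfTail tail u v) : G.Adj u v :=
  h.1

theorem orientationOfTail_xor {tail : G.edgeSet → V}
    (htail : ∀ e : G.edgeSet, tail e ∈ (e : Sym2 V)) {u v : V} (huv : G.Adj u v) :
    Xor (G.orientationOfTail tail u v) (G.orientationOfTail tail v u) := by
  have hswap : (⟨s(v, u), huv.symm⟩ : G.edgeSet) = ⟨s(u, v), huv⟩ := Subtype.ext Sym2.eq_swap
  simp only [orientationOfTail, Xor, hswap, exists_prop_of_true huv, exists_prop_of_true huv.symm]
  rcases Sym2.mem_iff.mp (htail ⟨s(u, v), huv⟩) with h | h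
  · exact Or.inl ⟨h, fun h' => huv.ne (h.symm.trans h')⟩
  · exact Or.inr ⟨h, fun h' => huv.ne (h'.symm.trans h)⟩

theorem ncard_orientationOfTail_le {k : ℕ} (f : G.edgeSet → V × Fin k) (hf : Injective f)
    (v : V) : {w | G.orientationOfTail (Prod.fst ∘ f) v w}.ncard ≤ k := by
  let label (w : {w | G.orientationOfTail (Prod.fst ∘ f) v w}) : Fin k := (f ⟨s(v, w), w.2.1⟩).2
  have hlabel : Injective label := fun w w' h => by
    have hfst : (f ⟨s(v, w), w.2.1⟩).1 = (f ⟨s(v, w'), w'.2.1⟩).1 := w.2.2.trans w'.2.2.symm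
    exact Subtype.ext (Sym2.congr_right.mp (congrArg Subtype.val (hf (Prod.ext hfst h))))
  simpa only [Nat.card_coe_set_eq, Nat.card_fin] using Nat.card_le_card_of_injective label hlabel

theorem exists_injective_endpoint_labelling [Fintype V] {k : ℕ}
    (h : ∀ s : Set V, {e : Sym2 V | e ∈ G.edgeSet ∧ ∀ v ∈ e, v ∈ s}.ncard ≤ k * s.ncard) :
    ∃ f : G.edgeSet → V × Fin k, Injective f ∧ ∀ e : G.edgeSet, (f e).1 ∈ (e : Sym2 V) := by
  classical
  let t (e : G.edgeSet) : Finset (V × Fin k) := {p | p.1 ∈ (e : Sym2 V)}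
  suffices hall : ∀ S : Finset G.edgeSet, S.card ≤ (S.biUnion t).card by
    obtain ⟨f, hf, hft⟩ := (Finset.all_card_le_biUnion_card_iff_exists_injective t).mp hall
    exact ⟨f, hf, fun e => by simpa [t] using hft e⟩
  intro S
  let s : Set V := {v | ∃ e ∈ S, v ∈ (e : Sym2 V)}
  have hS : S.card ≤ {e : Sym2 V | e ∈ G.edgeSet ∧ ∀ v ∈ e, v ∈ s}.ncard := by
    rw [← Set.ncard_coe_finset]
    exact Set.ncard_le_ncard_of_injOn Subtype.val (fun e he => ⟨e.2, fun v hv => ⟨e, he, hv⟩⟩)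
      Subtype.val_injective.injOn
  have hbiUnion : S.biUnion t = s.toFinset ×ˢ Finset.univ := by
    ext
    simp [t, s]
  calc S.card ≤ k * s.ncard := hS.trans (h s)
    _ = (S.biUnion t).card := by
      rw [hbiUnion, Finset.card_product, Finset.card_univ, Fintype.card_fin,
        Set.ncard_eq_toFinset_card', mul_comm]

end SimpleGraph

/-- Marriage-theorem characterization of `k`-orientability: a finite graph `G` admits an
orientation of its edges with all out-degrees at most `k` if and only if every subgraph
`H` satisfies `|E(H)| ≤ k·|V(H)|` (equivalently `δ(H) = k|V(H)| − |E(H)| ≥ 0`). -/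
theorem stmt15 {V : Type} [Fintype V] (G : SimpleGraph V) (k : ℕ) :
    (∃ E : V → V → Prop,
      (∀ u v, E u v → G.Adj u v) ∧
      (∀ u v, G.Adj u v → Xor' (E u v) (E v u)) ∧
      (∀ v, {w | E v w}.ncard ≤ k))
    ↔ ∀ s : Set V,
        {e : Sym2 V | e ∈ G.edgeSet ∧ ∀ v ∈ e, v ∈ s}.ncard ≤ k * s.ncard := by
  constructor
  · rintro ⟨E, -, hE, hk⟩ s
    exact (G.ncard_edges_within_le_ncard_arcs (fun u v huv => Xor.or (hE u v huv)) s).trans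
      (ncard_setOf_fst_mem_le E hk s)
  · intro h
    obtain ⟨f, hf, hmem⟩ := G.exists_injective_endpoint_labelling h
    exact ⟨G.orientationOfTail (Prod.fst ∘ f), fun _ _ => SimpleGraph.orientationOfTail_adj,
      fun _ _ => SimpleGraph.orientationOfTail_xor hmem,
      SimpleGraph.ncard_orientationOfTail_le f hf⟩
end

section
/- For the class S_{r,t} encoding partial Steiner (r,t)-systems via a partial function F from t-tuples to r-element sets, the map G ↦ S_G is a bijection (up to isomorphism) between partial Steiner (r,t)-systems and structures in S_{r,t}, and G is a strongly induced subsystem of H if and only if S_G is a substructure of S_H. -/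
/-- A partial Steiner `(r,t)`-system: an `r`-uniform hypergraph in which every `t`-element
vertex set lies in at most one hyperedge. -/
def IsSteiner {V : Type} (r t : ℕ) (H : Set (Finset V)) : Prop :=
  (∀ e ∈ H, e.card = r) ∧
  ∀ s : Finset V, s.card = t → ∀ e1 ∈ H, ∀ e2 ∈ H, s ⊆ e1 → s ⊆ e2 → e1 = e2

/-- The encoding `S_G`: the partial function sending an injective `t`-tuple to the unique
hyperedge containing it (if any). -/
noncomputable def encodeSt {V : Type} (t : ℕ) (H : Set (Finset V)) :
    (Fin t → V) → Option (Finset V) := fun x =>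
  haveI := Classical.propDecidable
  if h : Function.Injective x ∧ ∃ e ∈ H, ∀ i, x i ∈ e then some h.2.choose else none

/-- Membership in the class `S_{r,t}`: tuples in the domain are injective, values are
`r`-sets containing their tuple, and every injective `t`-tuple from a value is in the
domain with the same value. -/
def InSrt {V : Type} (r t : ℕ) (F : (Fin t → V) → Option (Finset V)) : Prop :=
  ∀ x e, F x = some e → Function.Injective x ∧ e.card = r ∧ (∀ i, x i ∈ e) ∧
    ∀ y : Fin t → V, Function.Injective y → (∀ i, y i ∈ e) → F y = some e

/-- The induced (strongly induced candidate) subsystem of `H` on the vertex set `S`. -/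
def restrictH {V : Type} (H : Set (Finset V)) (S : Finset V) : Set (Finset V) :=
  {e ∈ H | e ⊆ S}

/-!
Every hyperedge of a partial Steiner `(r,t)`-system has `r ≥ t` vertices, so it is the value of
`S_G` at some injective `t`-tuple; hence `G` is recovered as the range of `S_G`, and conversely the
range of any `F ∈ S_{r,t}` is a Steiner system whose encoding is `F`, because two values of `F`
sharing a `t`-set share a `t`-tuple. An induced subsystem on `S` is strongly induced exactly when
no hyperedge leaving `S` meets it in `t` vertices, i.e. when no `t`-tuple from `S` is sent by `S_H`
to a hyperedge leaving `S`; under this closure condition `S_G` and `S_H` agree on tuples from `S`.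
-/

open Function

variable {V : Type} {r t : ℕ}

namespace Finset

lemma exists_injective_tuple_of_card_eq (s : Finset V) (hs : s.card = t) :
    ∃ x : Fin t → V, Injective x ∧ ∀ i, x i ∈ s :=
  ⟨fun i => s.equivFin.symm (Fin.cast hs.symm i),
    Subtype.val_injective.comp (s.equivFin.symm.injective.comp (Fin.cast_injective _)),
    fun _ => (s.equivFin.symm _).2⟩

lemma le_card_of_injective_tuple {s : Finset V} {x : Fin t → V} (hx : Injective x)
    (hxs : ∀ i, x i ∈ s) : t ≤ s.card := by
  simpa using Finset.card_le_card_of_injOn x (s := univ) (fun i _ => hxs i) hx.injOn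

end Finset

namespace IsSteiner

lemma mono {H H' : Set (Finset V)} (hH : IsSteiner r t H) (h : H' ⊆ H) : IsSteiner r t H' :=
  ⟨fun e he => hH.1 e (h he), fun s hs e1 he1 e2 he2 => hH.2 s hs e1 (h he1) e2 (h he2)⟩

lemma eq_of_injective_tuple {H : Set (Finset V)} (hH : IsSteiner r t H) {x : Fin t → V}
    (hx : Injective x) {e1 e2 : Finset V} (he1 : e1 ∈ H) (he2 : e2 ∈ H)
    (hxe1 : ∀ i, x i ∈ e1) (hxe2 : ∀ i, x i ∈ e2) : e1 = e2 := by
  refine hH.2 (Finset.univ.map ⟨x, hx⟩) (by simp) e1 he1 e2 he2 ?_ ?_ <;>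
    simpa [Finset.subset_iff]

end IsSteiner

lemma encodeSt_eq_some {H : Set (Finset V)} {x : Fin t → V} {e : Finset V}
    (h : encodeSt t H x = some e) : Injective x ∧ e ∈ H ∧ ∀ i, x i ∈ e := by
  unfold encodeSt at h
  split_ifs at h with hc
  cases h
  exact ⟨hc.1, hc.2.choose_spec⟩

lemma IsSteiner.encodeSt_eq_some_iff {H : Set (Finset V)} (hH : IsSteiner r t H)
    {x : Fin t → V} {e : Finset V} :
    encodeSt t H x = some e ↔ Injective x ∧ e ∈ H ∧ ∀ i, x i ∈ e := by
  refine ⟨encodeSt_eq_some, fun ⟨hx, he, hxe⟩ => ?_⟩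
  have hc : Injective x ∧ ∃ e ∈ H, ∀ i, x i ∈ e := ⟨hx, e, he, hxe⟩
  unfold encodeSt
  rw [dif_pos hc]
  exact congrArg some (hH.eq_of_injective_tuple hx hc.2.choose_spec.1 he hc.2.choose_spec.2 hxe)

lemma IsSteiner.inSrt_encodeSt {H : Set (Finset V)} (hH : IsSteiner r t H) :
    InSrt r t (encodeSt t H) := by
  intro x e hxe
  obtain ⟨hx, he, hmem⟩ := encodeSt_eq_some hxe
  exact ⟨hx, hH.1 e he, hmem, fun y hy hye => hH.encodeSt_eq_some_iff.2 ⟨hy, he, hye⟩⟩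

lemma IsSteiner.mem_iff_exists_encodeSt_eq_some (htr : t ≤ r) {H : Set (Finset V)}
    (hH : IsSteiner r t H) {e : Finset V} : e ∈ H ↔ ∃ x, encodeSt t H x = some e := by
  refine ⟨fun he => ?_, fun ⟨x, hx⟩ => (encodeSt_eq_some hx).2.1⟩
  obtain ⟨s, hse, hs⟩ := Finset.exists_subset_card_eq (s := e) (n := t) (hH.1 e he ▸ htr)
  obtain ⟨x, hx, hxs⟩ := s.exists_injective_tuple_of_card_eq hs
  exact ⟨x, hH.encodeSt_eq_some_iff.2 ⟨hx, he, fun i => hse (hxs i)⟩⟩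

lemma IsSteiner.eq_of_encodeSt_eq (htr : t ≤ r) {H1 H2 : Set (Finset V)}
    (h1 : IsSteiner r t H1) (h2 : IsSteiner r t H2) (h : encodeSt t H1 = encodeSt t H2) :
    H1 = H2 := by
  ext e
  rw [h1.mem_iff_exists_encodeSt_eq_some htr, h2.mem_iff_exists_encodeSt_eq_some htr, h]

def hyperedgesOf (F : (Fin t → V) → Option (Finset V)) : Set (Finset V) :=
  {e | ∃ x, F x = some e}

namespace InSrt

variable {F : (Fin t → V) → Option (Finset V)}

lemma isSteiner_hyperedgesOf (hF : InSrt r t F) : IsSteiner r t (hyperedgesOf F) := by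
  refine ⟨fun e ⟨x, hx⟩ => (hF x e hx).2.1, ?_⟩
  rintro s hs e1 ⟨x1, hx1⟩ e2 ⟨x2, hx2⟩ h1 h2
  obtain ⟨y, hy, hys⟩ := s.exists_injective_tuple_of_card_eq hs
  have f1 := (hF x1 e1 hx1).2.2.2 y hy fun i => h1 (hys i)
  have f2 := (hF x2 e2 hx2).2.2.2 y hy fun i => h2 (hys i)
  exact Option.some.inj (f1.symm.trans f2)

lemma eq_encodeSt_hyperedgesOf (hF : InSrt r t F) : F = encodeSt t (hyperedgesOf F) := by
  funext x
  refine Option.ext fun e => ?_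
  rw [hF.isSteiner_hyperedgesOf.encodeSt_eq_some_iff]
  refine ⟨fun hx => ?_, fun ⟨hx, ⟨x', hx'⟩, hxe⟩ => (hF x' e hx').2.2.2 x hx hxe⟩
  obtain ⟨hinj, -, hxe, -⟩ := hF x e hx
  exact ⟨hinj, ⟨x, hx⟩, hxe⟩

end InSrt

lemma IsSteiner.encodeSt_restrictH_eq {H : Set (Finset V)} (hH : IsSteiner r t H) {S : Finset V}
    (hclosed : ∀ x e, encodeSt t H x = some e → (∀ i, x i ∈ S) → e ⊆ S)
    {x : Fin t → V} (hxS : ∀ i, x i ∈ S) : encodeSt t (restrictH H S) x = encodeSt t H x := by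
  refine Option.ext fun e => ?_
  rw [(hH.mono fun _ he => he.1).encodeSt_eq_some_iff]
  refine ⟨fun ⟨hx, he, hxe⟩ => hH.encodeSt_eq_some_iff.2 ⟨hx, he.1, hxe⟩, fun h => ?_⟩
  obtain ⟨hx, he, hxe⟩ := encodeSt_eq_some h
  exact ⟨hx, ⟨he, hclosed x e h hxS⟩, hxe⟩

lemma IsSteiner.card_filter_lt_iff_encodeSt_closed [DecidableEq V] {H : Set (Finset V)}
    (hH : IsSteiner r t H) {S : Finset V} :
    (∀ e ∈ H, ¬ e ⊆ S → (e.filter (· ∈ S)).card < t) ↔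
      ∀ x e, encodeSt t H x = some e → (∀ i, x i ∈ S) → e ⊆ S := by
  constructor
  · intro hc x e hxe hxS
    obtain ⟨hx, he, hmem⟩ := encodeSt_eq_some hxe
    by_contra heS
    refine (hc e he heS).not_ge (Finset.le_card_of_injective_tuple hx fun i => ?_)
    exact Finset.mem_filter.2 ⟨hmem i, hxS i⟩
  · intro hclosed e he heS
    by_contra! hcard
    obtain ⟨s, hse, hs⟩ := Finset.exists_subset_card_eq hcard
    obtain ⟨x, hx, hxs⟩ := s.exists_injective_tuple_of_card_eq hs
    have hxeS : ∀ i, x i ∈ e ∧ x i ∈ S := fun i => Finset.mem_filter.1 (hse (hxs i))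
    exact heS (hclosed x e (hH.encodeSt_eq_some_iff.2 ⟨hx, he, fun i => (hxeS i).1⟩)
      fun i => (hxeS i).2)

/-- The map `G ↦ S_G` is a bijection (up to equality of encodings) between partial
Steiner `(r,t)`-systems and structures in `S_{r,t}`, and `G` is a strongly induced
subsystem of `H` exactly when `S_G` is a substructure of `S_H`. -/
theorem stmt16 {V : Type} [DecidableEq V] (r t : ℕ) (htr : t ≤ r) (ht : 2 ≤ t) :
    (∀ H : Set (Finset V), IsSteiner r t H → InSrt r t (encodeSt t H)) ∧
    (∀ H1 H2 : Set (Finset V), IsSteiner r t H1 → IsSteiner r t H2 →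
      encodeSt t H1 = encodeSt t H2 → H1 = H2) ∧
    (∀ F : (Fin t → V) → Option (Finset V), InSrt r t F →
      ∃ H : Set (Finset V), IsSteiner r t H ∧ F = encodeSt t H) ∧
    (∀ H : Set (Finset V), IsSteiner r t H → ∀ S : Finset V,
      ((∀ e ∈ H, ¬ e ⊆ S → (e.filter (· ∈ S)).card ≤ t - 1)
        ↔ ((∀ x e, encodeSt t H x = some e → (∀ i, x i ∈ S) → e ⊆ S) ∧
           (∀ x : Fin t → V, (∀ i, x i ∈ S) →
             encodeSt t (restrictH H S) x = encodeSt t H x)))) := by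
  refine ⟨fun H hH => hH.inSrt_encodeSt,
    fun H1 H2 h1 h2 => IsSteiner.eq_of_encodeSt_eq htr h1 h2,
    fun F hF => ⟨hyperedgesOf F, hF.isSteiner_hyperedgesOf, hF.eq_encodeSt_hyperedgesOf⟩,
    fun H hH S => ?_⟩
  simp only [Nat.le_sub_one_iff_lt (by omega : 0 < t)]
  exact hH.card_filter_lt_iff_encodeSt_closed.trans
    ⟨fun h => ⟨h, fun x => hH.encodeSt_restrictH_eq h⟩, And.left⟩
end

section
/- The class S_{r,t} (partial Steiner (r,t)-systems encoded with a partial function from t-tuples to r-sets) is closed under free amalgamation: if A is a substructure of both B_1 and B_2 in S_{r,t}, then the free amalgam of B_1 and B_2 over A is again in S_{r,t}. -/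
/-- A partial Steiner `(r,t)`-structure supported on the vertex set `B`: the partial
function `F` sends injective `t`-tuples from `B` to `r`-element subsets of `B` containing
the tuple, and every injective `t`-tuple from a value is in the domain with the same
value. -/
def SteinerOn {V : Type} (r t : ℕ) (B : Set V)
    (F : (Fin t → V) → Option (Finset V)) : Prop :=
  ∀ x e, F x = some e →
    (∀ i, x i ∈ B) ∧ (↑e : Set V) ⊆ B ∧ Function.Injective x ∧ e.card = r ∧
    (∀ i, x i ∈ e) ∧
    ∀ y : Fin t → V, Function.Injective y → (∀ i, y i ∈ e) → F y = some e

variable {V : Type} {r t : ℕ} {B C : Set V} {F G : (Fin t → V) → Option (Finset V)}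

theorem SteinerOn.block_of_subset (hF : SteinerOn r t C F) (hCB : C ⊆ B)
    {x : Fin t → V} {e : Finset V} (hx : F x = some e)
    (hG : ∀ y, F y = some e → G y = some e) :
    (∀ i, x i ∈ B) ∧ (↑e : Set V) ⊆ B ∧ Function.Injective x ∧ e.card = r ∧
      (∀ i, x i ∈ e) ∧
      ∀ y : Fin t → V, Function.Injective y → (∀ i, y i ∈ e) → G y = some e := by
  obtain ⟨hxC, heC, hinj, hcard, hxe, hclosed⟩ := hF x e hx
  exact ⟨fun i => hCB (hxC i), heC.trans hCB, hinj, hcard, hxe,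
    fun y hy hye => hG y (hclosed y hy hye)⟩

theorem SteinerOn.orElse_eq_some_of_right {B1 B2 : Set V}
    {F1 F2 : (Fin t → V) → Option (Finset V)}
    (h1 : SteinerOn r t B1 F1)
    (hagree : ∀ x : Fin t → V, (∀ i, x i ∈ B1 ∩ B2) → F1 x = F2 x)
    {y : Fin t → V} {e : Finset V} (hy : F2 y = some e) (hyB2 : ∀ i, y i ∈ B2) :
    (F1 y).orElse (fun _ => F2 y) = some e := by
  cases hF1y : F1 y with
  | none => simpa using hy
  | some e' =>
    -- a tuple of `B2` on which `F1` is defined lies in `B1 ∩ B2`, where the structures agree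
    have hyB1 : ∀ i, y i ∈ B1 := (h1 y e' hF1y).1
    rw [← hF1y, hagree y fun i => ⟨hyB1 i, hyB2 i⟩, hy]
    rfl

theorem stmt17_general {V : Type} (r t : ℕ) (B1 B2 : Set V)
    (F1 F2 : (Fin t → V) → Option (Finset V))
    (h1 : SteinerOn r t B1 F1) (h2 : SteinerOn r t B2 F2)
    (hagree : ∀ x : Fin t → V, (∀ i, x i ∈ B1 ∩ B2) → F1 x = F2 x) :
    SteinerOn r t (B1 ∪ B2) (fun x => (F1 x).orElse (fun _ => F2 x)) := by
  intro x e hx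
  rcases (Option.orElse_eq_some (F1 x) (F2 x) e).1 hx with hx | ⟨-, hx⟩
  · exact h1.block_of_subset Set.subset_union_left hx fun y hy => by simp [hy]
  · exact h2.block_of_subset Set.subset_union_right hx fun y hy =>
      h1.orElse_eq_some_of_right hagree hy (h2 y e hy).1

/-- The class `S_{r,t}` is closed under free amalgamation: if `A = B1 ∩ B2` is a common
substructure of the Steiner structures `(B1, F1)` and `(B2, F2)`, then the free amalgam
(`F1` on `B1`, `F2` on `B2`, undefined on mixed tuples, with no identifications outside
`A`) is again in `S_{r,t}`. -/
theorem stmt17 {V : Type} (r t : ℕ) (B1 B2 : Set V)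
    (F1 F2 : (Fin t → V) → Option (Finset V))
    (h1 : SteinerOn r t B1 F1) (h2 : SteinerOn r t B2 F2)
    (hagree : ∀ x : Fin t → V, (∀ i, x i ∈ B1 ∩ B2) → F1 x = F2 x)
    (hcl1 : ∀ x e, F1 x = some e → (∀ i, x i ∈ B1 ∩ B2) → (↑e : Set V) ⊆ B1 ∩ B2)
    (hcl2 : ∀ x e, F2 x = some e → (∀ i, x i ∈ B1 ∩ B2) → (↑e : Set V) ⊆ B1 ∩ B2) :
    SteinerOn r t (B1 ∪ B2) (fun x => (F1 x).orElse (fun _ => F2 x)) :=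
  stmt17_general r t B1 B2 F1 F2 h1 h2 hagree
end
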